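/- arXiv:0912.3844 — 9 statements merged into one kernel-verified Lean document; each statement's English description precedes it below -/
import Mathlib

section
/- The improper integral ∫₁^∞ e^{iπx} · x^(1/x) · (1 − ln x)/x² dx converges absolutely, the limit M_I := lim_{N→∞, N∈ℕ} ∫₁^{2N} e^{iπx} · x^(1/x) dx exists in ℂ, and M_I = −2i/π + (i/π) · ∫₁^∞ e^{iπx} · x^(1/x) · (1 − ln x)/x² dx. -/
open MeasureTheory Filter Set Topology

/-! Since `x ^ (1 / x) = exp (log x / x)` has derivative `x ^ (1 / x) (1 - log x) / x²`,
integration by parts against `e^{iπx} = (e^{iπx} / (iπ))'` gives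
`∫₁^{2N} e^{iπx} x^(1/x) dx
  = ((2N)^(1/(2N)) + 1) / (iπ) - (1 / (iπ)) ∫₁^{2N} e^{iπx} x^(1/x) (1 - log x) / x² dx`,
using `e^{2πiN} = 1` and `e^{iπ} = -1`. The boundary term tends to `2 / (iπ) = -2i/π`, and the
remaining integrand is `O(x^(-3/2))`, hence absolutely integrable on `(1, ∞)`. -/

section IntegrationByParts

variable {c : ℂ} {f f' : ℝ → ℂ}

theorem integral_cexp_mul_eq_of_hasDerivAt (hc : c ≠ 0) {a b : ℝ}
    (hf : ∀ x ∈ uIcc a b, HasDerivAt f (f' x) x)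
    (hf' : IntervalIntegrable (fun x => Complex.exp (c * x) * f' x) volume a b) :
    ∫ x in a..b, Complex.exp (c * x) * f x =
      (Complex.exp (c * b) * f b - Complex.exp (c * a) * f a) / c -
        (∫ x in a..b, Complex.exp (c * x) * f' x) / c := by
  have hexp (x : ℝ) :
      HasDerivAt (fun y : ℝ => Complex.exp (c * y)) (Complex.exp (c * x) * c) x := by
    simpa using ((hasDerivAt_id (x : ℂ)).const_mul c).comp_ofReal.cexp
  have hderiv : ∀ x ∈ uIcc a b, HasDerivAt (fun y : ℝ => Complex.exp (c * y) * f y / c)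
      (Complex.exp (c * x) * f x + Complex.exp (c * x) * f' x / c) x := by
    intro x hx
    refine (((hexp x).mul (hf x hx)).div_const c).congr_deriv ?_
    field_simp
  have hint : IntervalIntegrable (fun x => Complex.exp (c * x) * f x) volume a b :=
    ContinuousOn.intervalIntegrable <|
      (Continuous.continuousOn (by fun_prop)).mul
        fun x hx => (hf x hx).continuousAt.continuousWithinAt
  have hftc := intervalIntegral.integral_eq_sub_of_hasDerivAt hderiv (hint.add (hf'.div_const c))
  rw [intervalIntegral.integral_add hint (hf'.div_const c), intervalIntegral.integral_div] at hftc
  linear_combination hftc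

theorem tendsto_integral_cexp_mul_of_hasDerivAt {ι : Type*} {l : Filter ι} {b : ι → ℝ}
    {a : ℝ} {L : ℂ} [l.IsCountablyGenerated] (hc : c ≠ 0) (hb : Tendsto b l atTop)
    (hf : ∀ x : ℝ, a ≤ x → HasDerivAt f (f' x) x)
    (hf' : IntegrableOn (fun x : ℝ => Complex.exp (c * x) * f' x) (Ioi a))
    (hlim : Tendsto (fun i => Complex.exp (c * b i) * f (b i)) l (𝓝 L)) :
    Tendsto (fun i => ∫ x in a..b i, Complex.exp (c * x) * f x) l
      (𝓝 ((L - Complex.exp (c * a) * f a) / c -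
        (∫ x in Ioi a, Complex.exp (c * x) * f' x) / c)) := by
  refine Tendsto.congr' ?_ (((hlim.sub_const _).div_const c).sub
    ((intervalIntegral_tendsto_integral_Ioi a hf' hb).div_const c))
  filter_upwards [hb.eventually_ge_atTop a] with i hi
  refine (integral_cexp_mul_eq_of_hasDerivAt hc (fun x hx => hf x ?_) ?_).symm
  · exact (uIcc_of_le hi ▸ hx).1
  · exact (intervalIntegrable_iff_integrableOn_Ioc_of_le hi).2 (hf'.mono_set Ioc_subset_Ioi_self)

end IntegrationByParts

namespace Real

theorem hasDerivAt_exp_log_div_self {x : ℝ} (hx : 0 < x) :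
    HasDerivAt (fun y => exp (log y / y)) (exp (log x / x) * ((1 - log x) / x ^ 2)) x := by
  refine (((hasDerivAt_log hx.ne').div (hasDerivAt_id' x) hx.ne').exp).congr_deriv ?_
  field_simp
  exact mul_comm _ _

theorem tendsto_exp_log_div_self_atTop : Tendsto (fun x => exp (log x / x)) atTop (𝓝 1) :=
  (continuous_exp.tendsto' 0 1 exp_zero).comp isLittleO_log_id_atTop.tendsto_div_nhds_zero

theorem abs_deriv_exp_log_div_self_le {x : ℝ} (hx : 1 ≤ x) :
    |exp (log x / x) * ((1 - log x) / x ^ 2)| ≤ 9 * x ^ (-(3 / 2) : ℝ) := by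
  have hx0 : 0 < x := one_pos.trans_le hx
  have hlog : 0 ≤ log x := log_nonneg hx
  have hexp : exp (log x / x) ≤ 3 := by
    have : log x / x ≤ 1 := (div_le_one hx0).2 ((log_le_sub_one_of_pos hx0).trans (by linarith))
    linarith [exp_le_exp.2 this, exp_one_lt_d9]
  have hsqrt : 1 ≤ x ^ (1 / 2 : ℝ) := one_le_rpow hx (by norm_num)
  have hlog_le : |1 - log x| ≤ 3 * x ^ (1 / 2 : ℝ) := by
    have := log_le_rpow_div hx0.le (by norm_num : (0 : ℝ) < 1 / 2)
    rw [abs_le]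
    constructor <;> linarith
  have hpow : x ^ (1 / 2 : ℝ) / x ^ 2 = x ^ (-(3 / 2) : ℝ) := by
    rw [← rpow_natCast, ← rpow_sub hx0]
    norm_num
  rw [abs_mul, abs_div, abs_of_pos (exp_pos _), abs_of_pos (by positivity : 0 < x ^ 2)]
  calc exp (log x / x) * (|1 - log x| / x ^ 2) ≤ 3 * (3 * x ^ (1 / 2 : ℝ) / x ^ 2) := by
        gcongr
    _ = 9 * x ^ (-(3 / 2) : ℝ) := by rw [mul_div_assoc, hpow]; ring

theorem integrableOn_deriv_exp_log_div_self :
    IntegrableOn (fun x => exp (log x / x) * ((1 - log x) / x ^ 2)) (Ioi 1) := by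
  have hdom : IntegrableOn (fun x : ℝ => 9 * x ^ (-(3 / 2) : ℝ)) (Ioi 1) :=
    (integrableOn_Ioi_rpow_of_lt (by norm_num) one_pos).const_mul 9
  refine hdom.mono' ?_ ?_
  · refine ContinuousOn.aestronglyMeasurable ?_ measurableSet_Ioi
    intro x hx
    have hx0 : x ≠ 0 := (one_pos.trans hx).ne'
    have hx2 : x ^ 2 ≠ 0 := pow_ne_zero 2 hx0
    fun_prop (disch := assumption)
  · filter_upwards [ae_restrict_mem measurableSet_Ioi] with x hx
    exact abs_deriv_exp_log_div_self_le hx.le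

end Real

theorem integrableOn_cexp_mul_I_mul_ofReal {g : ℝ → ℝ} {s : Set ℝ} (r : ℝ)
    (hg : IntegrableOn g s) :
    IntegrableOn (fun x : ℝ => Complex.exp (r * Complex.I * x) * g x) s :=
  hg.ofReal.bdd_mul (c := 1) (by fun_prop : Continuous _).aestronglyMeasurable
    (ae_of_all _ fun x => by simp [Complex.norm_exp])

theorem cexp_pi_mul_I_mul_two_mul_natCast (N : ℕ) :
    Complex.exp (Real.pi * Complex.I * ((2 * N : ℝ) : ℂ)) = 1 := by
  rw [← Complex.exp_nat_mul_two_pi_mul_I N]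
  push_cast
  ring_nf

/-- The improper integral `∫₁^∞ e^{iπx} x^(1/x) (1 - ln x)/x² dx` converges absolutely,
the limit `M_I = lim_{N→∞} ∫₁^{2N} e^{iπx} x^(1/x) dx` exists, and
`M_I = -2i/π + (i/π) ∫₁^∞ e^{iπx} x^(1/x) (1 - ln x)/x² dx`. -/
theorem oscillatory_integral_partial_integration :
    IntegrableOn
      (fun x : ℝ => Complex.exp ((Real.pi : ℂ) * Complex.I * (x : ℂ)) *
        (Real.exp (Real.log x / x) : ℂ) * (((1 - Real.log x) / x ^ 2 : ℝ) : ℂ))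
      (Set.Ioi (1 : ℝ)) ∧
    ∃ M : ℂ,
      Tendsto
        (fun N : ℕ => ∫ x in (1 : ℝ)..(2 * N : ℝ),
          Complex.exp ((Real.pi : ℂ) * Complex.I * (x : ℂ)) *
            (Real.exp (Real.log x / x) : ℂ))
        atTop (nhds M) ∧
      M = -2 * Complex.I / (Real.pi : ℂ) +
          (Complex.I / (Real.pi : ℂ)) *
            ∫ x in Set.Ioi (1 : ℝ),
              Complex.exp ((Real.pi : ℂ) * Complex.I * (x : ℂ)) *
                (Real.exp (Real.log x / x) : ℂ) *
                (((1 - Real.log x) / x ^ 2 : ℝ) : ℂ) := by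
  have hint := integrableOn_cexp_mul_I_mul_ofReal Real.pi Real.integrableOn_deriv_exp_log_div_self
  simp only [Complex.ofReal_mul] at hint
  refine ⟨by simpa only [mul_assoc] using hint, _, ?_, rfl⟩
  have hπI : (Real.pi : ℂ) * Complex.I ≠ 0 := by simp [Real.pi_ne_zero]
  have hderiv (x : ℝ) (hx : 1 ≤ x) :=
    (Real.hasDerivAt_exp_log_div_self (one_pos.trans_le hx)).ofReal_comp
  simp only [Complex.ofReal_mul] at hderiv
  have hlim : Tendsto (fun N : ℕ => Complex.exp (Real.pi * Complex.I * ((2 * N : ℝ) : ℂ)) *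
      (Real.exp (Real.log (2 * N) / (2 * N)) : ℂ)) atTop (𝓝 1) := by
    simp only [cexp_pi_mul_I_mul_two_mul_natCast, one_mul]
    exact (Complex.continuous_ofReal.tendsto' 1 1 Complex.ofReal_one).comp <|
      Real.tendsto_exp_log_div_self_atTop.comp <|
        tendsto_natCast_atTop_atTop.const_mul_atTop two_pos
  convert tendsto_integral_cexp_mul_of_hasDerivAt hπI
    (tendsto_natCast_atTop_atTop.const_mul_atTop two_pos) hderiv hint hlim using 2
  simp only [mul_assoc, Complex.ofReal_one, mul_one, Complex.exp_pi_mul_I, Real.log_one, zero_div,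
    Real.exp_zero]
  simp only [div_eq_mul_inv, mul_inv, Complex.inv_I]
  ring
end

section
/- Define integer coefficients α : ℕ × ℤ × ℤ → ℤ by α(n,r,s) = 0 whenever r < 0 or s < 0, α(0,0,0) = 1, and the recurrence α(n+1,r,s) = α(n,r−2,s) − α(n,r−2,s−1) + (s+1)·α(n,r−1,s+1) − (r−1)·α(n,r−1,s). Then for every n ∈ ℕ and every real x > 0, the n-th derivative of f(x) = x^(1/x) equals x^(1/x) · Σ_{r=0}^{2n} Σ_{s=0}^{n} α(n,r,s) · (ln x)^s / x^r. -/
/-!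
Write `x^(1/x) = exp g` with `g x = log x / x`, so that `g' x = (1 - log x) / x²`, and look for
the `n`-th derivative in the form `exp g · Σ c(r,s) (log x)^s x^(-r)`, summed over `ℤ × ℤ`.
Differentiating once more multiplies the sum by `(1 - log x) / x²`, which translates the
coefficients by `(2,0)` and `(2,1)`, and adds the derivative of the sum, which by
`(d/dx) (log x)^s x^(-r) = (s (log x)^(s-1) - r (log x)^s) x^(-r-1)` translates them by `(1,-1)`
and `(1,0)`. Together these translations are exactly the recurrence defining `α`.
-/

/-- The coefficients `α(n,r,s)`: `α(n,r,s) = 0` whenever `r < 0` or `s < 0`,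
`α(0,0,0) = 1` (and `α(0,r,s) = 0` otherwise), with the recurrence
`α(n+1,r,s) = α(n,r-2,s) - α(n,r-2,s-1) + (s+1)·α(n,r-1,s+1) - (r-1)·α(n,r-1,s)`. -/
def alphaCoef : ℕ → ℤ → ℤ → ℤ
  | 0, r, s => if r = 0 ∧ s = 0 then 1 else 0
  | n + 1, r, s =>
      if r < 0 ∨ s < 0 then 0
      else
        alphaCoef n (r - 2) s - alphaCoef n (r - 2) (s - 1) +
          (s + 1) * alphaCoef n (r - 1) (s + 1) - (r - 1) * alphaCoef n (r - 1) s

open Function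

theorem alphaCoef_eq_zero {n : ℕ} {r s : ℤ} (h : r < 0 ∨ s < 0 ∨ 2 * n < r ∨ n < s) :
    alphaCoef n r s = 0 := by
  induction n generalizing r s with
  | zero =>
    rw [alphaCoef, if_neg]
    omega
  | succ n ih =>
    rw [alphaCoef]
    split_ifs
    · rfl
    · rw [ih (by omega), ih (by omega), ih (by omega), ih (by omega)]
      ring

theorem alphaCoef_succ (n : ℕ) (r s : ℤ) :
    alphaCoef (n + 1) r s = alphaCoef n (r - 2) s - alphaCoef n (r - 2) (s - 1) +
      (s + 1) * alphaCoef n (r - 1) (s + 1) - (r - 1) * alphaCoef n (r - 1) s := by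
  rw [alphaCoef]
  split_ifs with hneg
  · have h (r' s' : ℤ) (h' : r' < 0 ∨ s' < 0) : alphaCoef n r' s' = 0 :=
      alphaCoef_eq_zero (by omega)
    have hmid : (s + 1) * alphaCoef n (r - 1) (s + 1) = 0 := by
      obtain h0 | hlt : s + 1 = 0 ∨ r - 1 < 0 ∨ s + 1 < 0 := by omega
      · rw [h0, zero_mul]
      · rw [h _ _ hlt, mul_zero]
    rw [h (r - 2) s (by omega), h (r - 2) (s - 1) (by omega), h (r - 1) s (by omega), hmid]
    ring
  · rfl

noncomputable def alphaCoefReal (n : ℕ) (p : ℤ × ℤ) : ℝ := alphaCoef n p.1 p.2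

theorem alphaCoefReal_succ (n : ℕ) (p : ℤ × ℤ) :
    alphaCoefReal (n + 1) p =
      (alphaCoefReal n (p - (2, 0)) - alphaCoefReal n (p - (2, 1))) +
        ((p.2 + 1) * alphaCoefReal n (p - (1, -1)) -
          (p.1 - 1) * alphaCoefReal n (p - (1, 0))) := by
  simp only [alphaCoefReal, alphaCoef_succ, Prod.fst_sub, Prod.snd_sub, sub_zero, sub_neg_eq_add]
  push_cast
  ring

theorem support_alphaCoefReal_subset (n : ℕ) :
    support (alphaCoefReal n) ⊆ Set.Icc 0 (((2 * n : ℕ) : ℤ), (n : ℤ)) := by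
  intro p hp
  have hbounds : ¬(p.1 < 0 ∨ p.2 < 0 ∨ 2 * n < p.1 ∨ n < p.2) := fun h =>
    hp (by simp [alphaCoefReal, alphaCoef_eq_zero h])
  simp only [Set.mem_Icc, Prod.le_def, Prod.fst_zero, Prod.snd_zero]
  omega

noncomputable def logPowerSum (c : ℤ × ℤ → ℝ) (x : ℝ) : ℝ :=
  ∑ᶠ p : ℤ × ℤ, c p * Real.log x ^ p.2 * x ^ (-p.1)

section logPowerSum

variable {c d : ℤ × ℤ → ℝ} {x : ℝ}

theorem logPowerSum_add (hc : HasFiniteSupport c) (hd : HasFiniteSupport d) :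
    logPowerSum (fun p => c p + d p) x = logPowerSum c x + logPowerSum d x := by
  simp only [logPowerSum, add_mul]
  exact finsum_add_distrib (by fun_prop) (by fun_prop)

theorem logPowerSum_sub (hc : HasFiniteSupport c) (hd : HasFiniteSupport d) :
    logPowerSum (fun p => c p - d p) x = logPowerSum c x - logPowerSum d x := by
  simp only [logPowerSum, sub_mul]
  exact finsum_sub_distrib (by fun_prop) (by fun_prop)

-- The exponents stay nonnegative because `0 ^ (m + n) = 0 ^ m * 0 ^ n` fails for `m = -n ≠ 0`,
-- and `log x = 0` at `x = 1`.
theorem logPowerSum_comp_sub (hs : ∀ p ∈ support c, 0 ≤ p.2) (hx : x ≠ 0) {a : ℤ × ℤ}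
    (ha : 0 ≤ a.2) :
    logPowerSum (fun p => c (p - a)) x = Real.log x ^ a.2 * x ^ (-a.1) * logPowerSum c x := by
  rw [logPowerSum, logPowerSum, mul_finsum]
  refine (finsum_comp_equiv (Equiv.addRight a)).symm.trans (finsum_congr fun p => ?_)
  by_cases hp : c p = 0
  · simp [hp]
  have hp₂ := hs p hp
  simp only [Equiv.coe_addRight, add_sub_cancel_right, Prod.fst_add, Prod.snd_add, neg_add,
    zpow_add₀ hx]
  rw [zpow_add' (Or.inr (by omega) : Real.log x ≠ 0 ∨ p.2 + a.2 ≠ 0 ∨ p.2 = 0 ∧ a.2 = 0)]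
  ring

theorem one_sub_log_div_sq_mul_logPowerSum (hc : HasFiniteSupport c)
    (hs : ∀ p ∈ support c, 0 ≤ p.2) (hx : x ≠ 0) :
    (1 - Real.log x) / x ^ 2 * logPowerSum c x =
      logPowerSum (fun p => c (p - (2, 0)) - c (p - (2, 1))) x := by
  rw [logPowerSum_sub (by fun_prop (disch := exact sub_left_injective))
    (by fun_prop (disch := exact sub_left_injective)), logPowerSum_comp_sub hs hx le_rfl,
    logPowerSum_comp_sub hs hx zero_le_one]
  simp only [zpow_neg, zpow_ofNat]
  ring

theorem logPowerSum_translate_eq_finsum_deriv (hc : HasFiniteSupport c) :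
    logPowerSum (fun p => (p.2 + 1) * c (p - (1, -1)) - (p.1 - 1) * c (p - (1, 0))) x =
      ∑ᶠ p : ℤ × ℤ,
        c p * ((p.2 * Real.log x ^ (p.2 - 1) - p.1 * Real.log x ^ p.2) * x ^ (-p.1 - 1)) := by
  have hC : logPowerSum (fun p => (p.2 + 1) * c (p - (1, -1))) x =
      ∑ᶠ p : ℤ × ℤ, c p * (p.2 * Real.log x ^ (p.2 - 1) * x ^ (-p.1 - 1)) := by
    refine (finsum_comp_equiv (Equiv.addRight (1, -1))).symm.trans (finsum_congr fun p => ?_)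
    simp only [Equiv.coe_addRight, add_sub_cancel_right, Prod.fst_add, Prod.snd_add,
      ← sub_eq_add_neg, neg_add']
    push_cast
    ring
  have hE : logPowerSum (fun p => (p.1 - 1) * c (p - (1, 0))) x =
      ∑ᶠ p : ℤ × ℤ, c p * (p.1 * Real.log x ^ p.2 * x ^ (-p.1 - 1)) := by
    refine (finsum_comp_equiv (Equiv.addRight (1, 0))).symm.trans (finsum_congr fun p => ?_)
    simp only [Equiv.coe_addRight, add_sub_cancel_right, Prod.fst_add, Prod.snd_add, add_zero,
      neg_add']
    push_cast
    ring
  rw [logPowerSum_sub (by fun_prop (disch := exact sub_left_injective))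
    (by fun_prop (disch := exact sub_left_injective)), hC, hE,
    ← finsum_sub_distrib (by fun_prop) (by fun_prop)]
  exact finsum_congr fun p => by ring

theorem hasDerivAt_logPowerSum (hc : HasFiniteSupport c) (hs : ∀ p ∈ support c, 0 ≤ p.2)
    (hx : 0 < x) :
    HasDerivAt (logPowerSum c)
      (logPowerSum (fun p => (p.2 + 1) * c (p - (1, -1)) - (p.1 - 1) * c (p - (1, 0))) x) x := by
  set S := hc.toFinset
  have hS (f : ℤ × ℤ → ℝ) (hf : ∀ p, c p = 0 → f p = 0) : ∑ᶠ p, f p = ∑ p ∈ S, f p :=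
    finsum_eq_sum_of_support_subset f fun p hp => hc.mem_toFinset.2 fun h => hp (hf p h)
  have hterm (p : ℤ × ℤ) (hp : p ∈ S) :
      HasDerivAt (fun t => c p * Real.log t ^ p.2 * t ^ (-p.1))
        (c p * ((p.2 * Real.log x ^ (p.2 - 1) - p.1 * Real.log x ^ p.2) * x ^ (-p.1 - 1))) x := by
    have hlog := (hasDerivAt_zpow p.2 _ (Or.inr (hs p (hc.mem_toFinset.1 hp)))).comp x
      (Real.hasDerivAt_log hx.ne')
    have hpow := hasDerivAt_zpow (-p.1) x (Or.inl hx.ne')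
    refine ((hlog.const_mul (c p)).mul hpow).congr_deriv ?_
    rw [zpow_sub_one₀ hx.ne', Function.comp_apply]
    push_cast
    ring
  rw [show logPowerSum c = fun t => ∑ p ∈ S, c p * Real.log t ^ p.2 * t ^ (-p.1) from
    funext fun t => hS _ fun p hp => by simp [hp]]
  refine (HasDerivAt.fun_sum hterm).congr_deriv ?_
  rw [logPowerSum_translate_eq_finsum_deriv hc, hS _ fun p hp => by simp [hp]]

theorem logPowerSum_eq_sum_range {N M : ℕ}
    (hc : support c ⊆ Set.Icc 0 ((N : ℤ), (M : ℤ))) :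
    logPowerSum c x = ∑ r ∈ Finset.range (N + 1), ∑ s ∈ Finset.range (M + 1),
      c (r, s) * Real.log x ^ s / x ^ r := by
  let e : ℕ × ℕ ↪ ℤ × ℤ := Nat.castEmbedding.prodMap Nat.castEmbedding
  rw [logPowerSum, finsum_eq_sum_of_support_subset (s := (Finset.range (N + 1) ×ˢ
    Finset.range (M + 1)).map e), Finset.sum_map, Finset.sum_product]
  · simp [e, zpow_neg, div_eq_mul_inv]
  · intro p hp
    have hp' := hc (left_ne_zero_of_mul (left_ne_zero_of_mul hp))
    simp only [Set.mem_Icc, Prod.le_def, Prod.fst_zero, Prod.snd_zero] at hp'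
    simp only [Finset.coe_map, Set.mem_image, Finset.mem_coe, Finset.mem_product,
      Finset.mem_range]
    exact ⟨(p.1.toNat, p.2.toNat), ⟨by omega, by omega⟩, by ext <;> simp [e] <;> omega⟩

end logPowerSum

theorem hasDerivAt_exp_log_div_self {x : ℝ} (hx : 0 < x) :
    HasDerivAt (fun t => Real.exp (Real.log t / t))
      (Real.exp (Real.log x / x) * ((1 - Real.log x) / x ^ 2)) x := by
  refine ((Real.hasDerivAt_log hx.ne').fun_div (hasDerivAt_id' x) hx.ne').exp.congr_deriv ?_
  field_simp

theorem iteratedDeriv_exp_log_div_self (n : ℕ) {x : ℝ} (hx : 0 < x) :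
    iteratedDeriv n (fun t => Real.exp (Real.log t / t)) x =
      Real.exp (Real.log x / x) * logPowerSum (alphaCoefReal n) x := by
  induction n generalizing x with
  | zero =>
    rw [logPowerSum_eq_sum_range (support_alphaCoefReal_subset 0)]
    simp [alphaCoefReal, alphaCoef]
  | succ n ih =>
    have hc : HasFiniteSupport (alphaCoefReal n) :=
      (Set.finite_Icc _ _).subset (support_alphaCoefReal_subset n)
    have hs (p : ℤ × ℤ) (hp : p ∈ support (alphaCoefReal n)) : 0 ≤ p.2 :=
      (support_alphaCoefReal_subset n hp).1.2
    have hloc : iteratedDeriv n (fun t => Real.exp (Real.log t / t)) =ᶠ[nhds x]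
        fun t => Real.exp (Real.log t / t) * logPowerSum (alphaCoefReal n) t :=
      Filter.eventually_of_mem (Ioi_mem_nhds hx) fun t ht => ih ht
    rw [iteratedDeriv_succ, hloc.deriv_eq,
      ((hasDerivAt_exp_log_div_self hx).fun_mul (hasDerivAt_logPowerSum hc hs hx)).deriv,
      funext (alphaCoefReal_succ n),
      logPowerSum_add (by fun_prop (disch := exact sub_left_injective))
        (by fun_prop (disch := exact sub_left_injective)),
      ← one_sub_log_div_sq_mul_logPowerSum hc hs hx.ne']
    ring

/-- For every `n ∈ ℕ` and real `x > 0`, the `n`-th derivative of `f x = x^(1/x)` equals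
`x^(1/x) · Σ_{r=0}^{2n} Σ_{s=0}^{n} α(n,r,s) (ln x)^s / x^r`. -/
theorem iteratedDeriv_self_rpow_inv_self (n : ℕ) (x : ℝ) (hx : 0 < x) :
    iteratedDeriv n (fun t : ℝ => Real.exp (Real.log t / t)) x =
      Real.exp (Real.log x / x) *
        ∑ r ∈ Finset.range (2 * n + 1), ∑ s ∈ Finset.range (n + 1),
          (alphaCoef n r s : ℝ) * Real.log x ^ s / x ^ r := by
  rw [iteratedDeriv_exp_log_div_self n hx,
    logPowerSum_eq_sum_range (support_alphaCoefReal_subset n)]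
  rfl
end

section
/- For every integer m ≥ 1, ∫_{ln m}^∞ (1 − z) · e^{iπ·exp(z)} · exp(z·e^{−z} − z) dz = (i·(−1)^m/π) · m^(1/m) · (1 − ln m)/m² + (i/π) · ∫_{ln m}^∞ e^{iπ·exp(z)} · exp(z·e^{−z} − 2z) · [2z − 3 + e^{−z}·(1 − 2z + z²)] dz, both improper integrals being convergent. -/
/-!
Write `u(z) = (1 - z) e^{z e^{-z} - 2z}` and `E(z) = e^{iπ e^z}`. Since `E' = iπ e^z E`, the
left integrand is `u E' / (iπ)`, and `u' = e^{z e^{-z} - 2z} (2z - 3 + e^{-z} (1 - z)²)`, so the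
identity is integration by parts: `(u E)' = iπ · (left integrand) + (right integrand)`.
At `z = ln m` the boundary term is `u(ln m) (-1)^m`; at infinity it vanishes, and both
integrands are integrable, because `z e^{-z} ≤ 1` makes everything
`O((1 + z)² e^{-z}) = O(e^{-z/2})`.
-/

open MeasureTheory Set Filter Topology Asymptotics Complex

noncomputable section

namespace PhaseIntegral

lemma mul_exp_neg_le_one (z : ℝ) : z * Real.exp (-z) ≤ 1 := by
  calc z * Real.exp (-z) ≤ Real.exp z * Real.exp (-z) := by
        gcongr; linarith [Real.add_one_le_exp z]
    _ = 1 := by rw [← Real.exp_add, add_neg_cancel, Real.exp_zero]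

lemma exp_mul_exp_neg_sub_le {z t : ℝ} (h : z ≤ t) :
    Real.exp (z * Real.exp (-z) - t) ≤ Real.exp 1 * Real.exp (-z) := by
  rw [← Real.exp_add]
  exact Real.exp_le_exp.2 (by linarith [mul_exp_neg_le_one z])

lemma one_add_sq_le_exp {z : ℝ} (hz : 0 ≤ z) : (1 + z) ^ 2 ≤ 16 * Real.exp (z / 2) := by
  have h : 1 + z / 4 ≤ Real.exp (z / 4) := by linarith [Real.add_one_le_exp (z / 4)]
  calc (1 + z) ^ 2 ≤ 16 * (1 + z / 4) ^ 2 := by nlinarith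
    _ ≤ 16 * Real.exp (z / 4) ^ 2 := by gcongr
    _ = 16 * Real.exp (z / 2) := by rw [← Real.exp_nat_mul]; ring_nf

lemma isBigO_exp_neg_half_of_norm_le {E : Type*} [NormedAddCommGroup E] {f : ℝ → E} (C : ℝ)
    (h : ∀ z, 0 ≤ z → ‖f z‖ ≤ C * ((1 + z) ^ 2 * Real.exp (-z))) :
    f =O[atTop] fun z => Real.exp (-(1 / 2) * z) := by
  have hC : 0 ≤ C := by simpa using (norm_nonneg _).trans (h 0 le_rfl)
  refine IsBigO.of_bound (16 * C) ?_
  filter_upwards [eventually_ge_atTop 0] with z hz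
  rw [Real.norm_of_nonneg (Real.exp_pos _).le]
  calc ‖f z‖ ≤ C * ((1 + z) ^ 2 * Real.exp (-z)) := h z hz
    _ ≤ C * (16 * Real.exp (z / 2) * Real.exp (-z)) := by gcongr; exact one_add_sq_le_exp hz
    _ = 16 * C * Real.exp (-(1 / 2) * z) := by
      rw [mul_assoc 16, ← Real.exp_add]; ring_nf

lemma _root_.Continuous.integrableOn_Ioi_of_isBigO_exp_neg {E : Type*} [NormedAddCommGroup E]
    {f : ℝ → E} {a b : ℝ} (hb : 0 < b) (hf : Continuous f)
    (ho : f =O[atTop] fun z => Real.exp (-b * z)) : IntegrableOn f (Ioi a) :=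
  ((hf.continuousOn.locallyIntegrableOn measurableSet_Ici).integrableOn_of_isBigO_atTop ho
    ⟨Ioi b, Ioi_mem_atTop b, exp_neg_integrableOn_Ioi b hb⟩).mono_set Ioi_subset_Ici_self

def phase (z : ℝ) : ℂ := Complex.exp ((Real.pi : ℂ) * I * (Real.exp z : ℂ))

lemma norm_phase (z : ℝ) : ‖phase z‖ = 1 := by
  simp [phase, Complex.norm_exp]

@[fun_prop]
lemma continuous_phase : Continuous phase := by
  unfold phase; fun_prop

lemma hasDerivAt_phase (z : ℝ) :
    HasDerivAt phase ((Real.pi : ℂ) * I * (Real.exp z : ℂ) * phase z) z :=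
  ((Real.hasDerivAt_exp z).ofReal_comp.const_mul ((Real.pi : ℂ) * I)).cexp.congr_deriv
    (mul_comm _ _)

lemma phase_log_intCast {n : ℤ} (hn : 0 < n) : phase (Real.log n) = (-1) ^ n := by
  rw [phase, Real.exp_log (by exact_mod_cast hn), Complex.ofReal_intCast, mul_comm,
    Complex.exp_int_mul, Complex.exp_pi_mul_I]

def amplitude (z : ℝ) : ℝ := (1 - z) * Real.exp (z * Real.exp (-z) - 2 * z)

lemma hasDerivAt_amplitude (z : ℝ) :
    HasDerivAt amplitude (Real.exp (z * Real.exp (-z) - 2 * z) *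
      (2 * z - 3 + Real.exp (-z) * (1 - 2 * z + z ^ 2))) z := by
  have hid := hasDerivAt_id' z
  refine ((hid.const_sub 1).mul (((hid.mul hid.neg.exp).sub (hid.const_mul 2)).exp)).congr_deriv ?_
  simp only [Pi.mul_apply, Pi.sub_apply, Pi.neg_apply]
  ring

lemma amplitude_log {x : ℝ} (hx : 0 < x) :
    amplitude (Real.log x) = Real.exp (Real.log x / x) * ((1 - Real.log x) / x ^ 2) := by
  have hexp : Real.exp (2 * Real.log x) = x ^ 2 := by
    rw [mul_comm, Real.exp_mul, Real.rpow_two, Real.exp_log hx]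
  rw [amplitude, Real.exp_sub, hexp, Real.exp_neg, Real.exp_log hx, ← div_eq_mul_inv]
  ring

lemma abs_amplitude_le {z : ℝ} (hz : 0 ≤ z) :
    |amplitude z| ≤ Real.exp 1 * ((1 + z) ^ 2 * Real.exp (-z)) := by
  rw [amplitude, abs_mul, abs_of_pos (Real.exp_pos _)]
  calc |1 - z| * Real.exp (z * Real.exp (-z) - 2 * z)
      ≤ (1 + z) ^ 2 * (Real.exp 1 * Real.exp (-z)) := by
        gcongr
        · rw [abs_le]; constructor <;> nlinarith
        · exact exp_mul_exp_neg_sub_le (by linarith)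
    _ = _ := by ring

def leftIntegrand (z : ℝ) : ℂ :=
  ((1 - z : ℝ) : ℂ) * phase z * (Real.exp (z * Real.exp (-z) - z) : ℂ)

def rightIntegrand (z : ℝ) : ℂ :=
  phase z * (Real.exp (z * Real.exp (-z) - 2 * z) : ℂ) *
    ((2 * z - 3 + Real.exp (-z) * (1 - 2 * z + z ^ 2) : ℝ) : ℂ)

lemma norm_leftIntegrand_le {z : ℝ} (hz : 0 ≤ z) :
    ‖leftIntegrand z‖ ≤ Real.exp 1 * ((1 + z) ^ 2 * Real.exp (-z)) := by
  simp only [leftIntegrand, norm_mul, norm_phase, Complex.norm_real, Real.norm_eq_abs,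
    abs_of_pos (Real.exp_pos _), mul_one]
  calc |1 - z| * Real.exp (z * Real.exp (-z) - z)
      ≤ (1 + z) ^ 2 * (Real.exp 1 * Real.exp (-z)) := by
        gcongr
        · rw [abs_le]; constructor <;> nlinarith
        · exact exp_mul_exp_neg_sub_le le_rfl
    _ = _ := by ring

lemma norm_rightIntegrand_le {z : ℝ} (hz : 0 ≤ z) :
    ‖rightIntegrand z‖ ≤ 4 * Real.exp 1 * ((1 + z) ^ 2 * Real.exp (-z)) := by
  simp only [rightIntegrand, norm_mul, norm_phase, Complex.norm_real, Real.norm_eq_abs,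
    abs_of_pos (Real.exp_pos _), one_mul]
  have h0 := Real.exp_pos (-z)
  have h1 : Real.exp (-z) ≤ 1 := Real.exp_le_one_iff.2 (by linarith)
  calc Real.exp (z * Real.exp (-z) - 2 * z) * |2 * z - 3 + Real.exp (-z) * (1 - 2 * z + z ^ 2)|
      ≤ Real.exp 1 * Real.exp (-z) * (4 * (1 + z) ^ 2) := by
        gcongr
        · exact exp_mul_exp_neg_sub_le (by linarith)
        · rw [abs_le]; constructor <;> nlinarith [sq_nonneg (1 - z)]
    _ = _ := by ring

lemma integrableOn_leftIntegrand (a : ℝ) : IntegrableOn leftIntegrand (Ioi a) := by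
  have hcont : Continuous leftIntegrand := by unfold leftIntegrand; fun_prop
  exact hcont.integrableOn_Ioi_of_isBigO_exp_neg one_half_pos
    (isBigO_exp_neg_half_of_norm_le _ fun _ => norm_leftIntegrand_le)

lemma integrableOn_rightIntegrand (a : ℝ) : IntegrableOn rightIntegrand (Ioi a) := by
  have hcont : Continuous rightIntegrand := by unfold rightIntegrand; fun_prop
  exact hcont.integrableOn_Ioi_of_isBigO_exp_neg one_half_pos
    (isBigO_exp_neg_half_of_norm_le _ fun _ => norm_rightIntegrand_le)

lemma hasDerivAt_amplitude_mul_phase (z : ℝ) :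
    HasDerivAt (fun z => (amplitude z : ℂ) * phase z)
      ((Real.pi : ℂ) * I * leftIntegrand z + rightIntegrand z) z := by
  refine ((hasDerivAt_amplitude z).ofReal_comp.mul (hasDerivAt_phase z)).congr_deriv ?_
  have hsplit : Real.exp (z * Real.exp (-z) - z) =
      Real.exp (z * Real.exp (-z) - 2 * z) * Real.exp z := by
    rw [← Real.exp_add]; ring_nf
  simp only [leftIntegrand, rightIntegrand, amplitude, hsplit]
  push_cast
  ring

lemma tendsto_amplitude_mul_phase :
    Tendsto (fun z => (amplitude z : ℂ) * phase z) atTop (𝓝 0) := by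
  have ho := isBigO_exp_neg_half_of_norm_le (f := fun z => (amplitude z : ℂ) * phase z) _
    fun z hz => by simpa [norm_phase] using abs_amplitude_le hz
  refine ho.trans_tendsto ?_
  exact Real.tendsto_exp_atBot.comp (tendsto_id.const_mul_atTop_of_neg (by norm_num))

lemma integral_Ioi_leftIntegrand (a : ℝ) :
    ∫ z in Ioi a, leftIntegrand z =
      I / Real.pi * (amplitude a * phase a) + I / Real.pi * ∫ z in Ioi a, rightIntegrand z := by
  have hint := ((integrableOn_leftIntegrand a).const_mul ((Real.pi : ℂ) * I)).add
    (integrableOn_rightIntegrand a)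
  have hftc := integral_Ioi_of_hasDerivAt_of_tendsto' (fun z _ => hasDerivAt_amplitude_mul_phase z)
    hint tendsto_amplitude_mul_phase
  rw [integral_add ((integrableOn_leftIntegrand a).const_mul _) (integrableOn_rightIntegrand a),
    integral_const_mul] at hftc
  have hπI : I / Real.pi * (Real.pi * I) = -1 := by
    field_simp [Complex.ofReal_ne_zero.2 Real.pi_ne_zero]
    simp
  linear_combination (-(I / Real.pi)) * hftc + (∫ z in Ioi a, leftIntegrand z) * hπI

end PhaseIntegral

end

/-- For every integer `m ≥ 1`, partial integration gives
`∫_{ln m}^∞ (1-z) e^{iπ e^z} e^{z e^{-z} - z} dz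
  = (i(-1)^m/π) m^(1/m) (1 - ln m)/m²
    + (i/π) ∫_{ln m}^∞ e^{iπ e^z} e^{z e^{-z} - 2z} [2z - 3 + e^{-z}(1 - 2z + z²)] dz`,
both improper integrals being convergent. -/
theorem exp_scaled_partial_integration (m : ℤ) (hm : 1 ≤ m) :
    IntegrableOn
      (fun z : ℝ => (((1 - z : ℝ)) : ℂ) *
        Complex.exp ((Real.pi : ℂ) * Complex.I * (Real.exp z : ℂ)) *
        (Real.exp (z * Real.exp (-z) - z) : ℂ))
      (Set.Ioi (Real.log m)) ∧
    IntegrableOn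
      (fun z : ℝ => Complex.exp ((Real.pi : ℂ) * Complex.I * (Real.exp z : ℂ)) *
        (Real.exp (z * Real.exp (-z) - 2 * z) : ℂ) *
        (((2 * z - 3 + Real.exp (-z) * (1 - 2 * z + z ^ 2) : ℝ)) : ℂ))
      (Set.Ioi (Real.log m)) ∧
    (∫ z in Set.Ioi (Real.log m),
        (((1 - z : ℝ)) : ℂ) *
          Complex.exp ((Real.pi : ℂ) * Complex.I * (Real.exp z : ℂ)) *
          (Real.exp (z * Real.exp (-z) - z) : ℂ)) =
      (Complex.I * (-1 : ℂ) ^ m / (Real.pi : ℂ)) *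
          (Real.exp (Real.log m / m) : ℂ) * (((1 - Real.log m) / (m : ℝ) ^ 2 : ℝ) : ℂ) +
        (Complex.I / (Real.pi : ℂ)) *
          ∫ z in Set.Ioi (Real.log m),
            Complex.exp ((Real.pi : ℂ) * Complex.I * (Real.exp z : ℂ)) *
              (Real.exp (z * Real.exp (-z) - 2 * z) : ℂ) *
              (((2 * z - 3 + Real.exp (-z) * (1 - 2 * z + z ^ 2) : ℝ)) : ℂ) := by
  have hm₀ : 0 < m := by omega
  refine ⟨PhaseIntegral.integrableOn_leftIntegrand _,
    PhaseIntegral.integrableOn_rightIntegrand _, ?_⟩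
  change ∫ z in Ioi _, PhaseIntegral.leftIntegrand z =
    _ + I / Real.pi * ∫ z in Ioi _, PhaseIntegral.rightIntegrand z
  rw [PhaseIntegral.integral_Ioi_leftIntegrand,
    PhaseIntegral.amplitude_log (by exact_mod_cast hm₀), PhaseIntegral.phase_log_intCast hm₀]
  push_cast
  ring
end

section
/- Let m be an integer and let g : ℝ → ℝ be integrable on [m, ∞) (i.e. ∫_m^∞ |g(x)| dx < ∞). Then ∫_m^∞ e^{iπx} · g(x) dx = (−1)^m · ∫₀¹ e^{iπy} · (Σ_{l=0}^∞ (−1)^l · g(m + l + y)) dy, where for almost every y ∈ [0,1] the series Σ_{l=0}^∞ (−1)^l g(m+l+y) converges absolutely and the function y ↦ Σ_{l=0}^∞ (−1)^l g(m+l+y) is integrable on [0,1]. -/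
/-!
Cut `[m, ∞)` into the unit intervals `[m + l, m + l + 1)` and translate each back to `[0, 1)`.
Tonelli gives `∑ₗ ∫₀¹ |g (m + l + y)| dy = ∫ₘ^∞ |g| < ∞`, hence a.e. absolute convergence of the
series and, by Fubini for sums, the exchange of `∑ₗ` and `∫₀¹`. On the `l`-th piece
`e^{iπ(m + l + y)} = (-1)^m (-1)^l e^{iπy}`, which produces the alternating series.
-/

open MeasureTheory Set Filter Complex
open scoped ENNReal Real

theorem iUnion_Ico_add_natCast {α : Type*} [Field α] [LinearOrder α] [IsStrictOrderedRing α]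
    [FloorSemiring α] (a : α) : ⋃ n : ℕ, Ico (a + n) (a + n + 1) = Ici a := by
  ext x
  simp only [mem_iUnion, mem_Ico, mem_Ici]
  constructor
  · rintro ⟨n, hn, -⟩
    linarith [(Nat.cast_nonneg n : (0 : α) ≤ n)]
  · intro hx
    refine ⟨⌊x - a⌋₊, ?_, ?_⟩
    · linarith [Nat.floor_le (sub_nonneg.mpr hx)]
    · linarith [Nat.lt_floor_add_one (x - a)]

theorem pairwise_disjoint_Ico_add_natCast {α : Type*} [Ring α] [PartialOrder α] [IsOrderedRing α]
    (a : α) : Pairwise (Function.onFun Disjoint fun n : ℕ => Ico (a + n) (a + n + 1)) := by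
  intro i j hij
  simpa only [Function.onFun, Int.cast_natCast] using
    pairwise_disjoint_Ico_add_intCast a (Nat.cast_injective.ne hij : (i : ℤ) ≠ j)

namespace MeasureTheory

section TsumIntegral

variable {α ι G : Type*} [MeasurableSpace α] {μ : Measure α} [Countable ι]
  [NormedAddCommGroup G] {f : ι → α → G}

theorem ae_summable_norm_of_tsum_lintegral_enorm_ne_top
    (hf : ∀ i, AEStronglyMeasurable (f i) μ) (hf' : ∑' i, ∫⁻ a, ‖f i a‖ₑ ∂μ ≠ ∞) :
    ∀ᵐ a ∂μ, Summable fun i => ‖f i a‖ := by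
  have hmeas : ∀ i, AEMeasurable (fun a => ‖f i a‖ₑ) μ := fun i => (hf i).enorm
  rw [← lintegral_tsum hmeas] at hf'
  filter_upwards [ae_lt_top' (AEMeasurable.tsum hmeas) hf'] with a ha
  exact NNReal.summable_coe.mpr (ENNReal.tsum_coe_ne_top_iff_summable.mp ha.ne)

theorem integrable_tsum_of_tsum_lintegral_enorm_ne_top [CompleteSpace G]
    (hf : ∀ i, AEStronglyMeasurable (f i) μ) (hf' : ∑' i, ∫⁻ a, ‖f i a‖ₑ ∂μ ≠ ∞) :
    Integrable (fun a => ∑' i, f i a) μ := by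
  have hsum : ∀ᵐ a ∂μ, Summable fun i => f i a :=
    (ae_summable_norm_of_tsum_lintegral_enorm_ne_top hf hf').mono fun a ha => ha.of_norm
  refine ⟨aestronglyMeasurable_of_tendsto_ae atTop
    (fun s => Finset.aestronglyMeasurable_sum s fun i _ => hf i) ?_, ?_⟩
  · filter_upwards [hsum] with a ha
    simp only [Finset.sum_apply]
    exact ha.hasSum
  · calc ∫⁻ a, ‖∑' i, f i a‖ₑ ∂μ ≤ ∫⁻ a, ∑' i, ‖f i a‖ₑ ∂μ :=
          lintegral_mono fun a => enorm_tsum_le_tsum_enorm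
      _ = ∑' i, ∫⁻ a, ‖f i a‖ₑ ∂μ := lintegral_tsum fun i => (hf i).enorm
      _ < ∞ := hf'.lt_top

end TsumIntegral

theorem measurePreserving_const_add_restrict_Ico (c : ℝ) :
    MeasurePreserving (c + ·) (volume.restrict (Ico 0 1)) (volume.restrict (Ico c (c + 1))) := by
  simpa only [preimage_const_add_Ico, sub_self, add_sub_cancel_left] using
    (measurePreserving_add_left volume c).restrict_preimage_emb (measurableEmbedding_addLeft c)
      (Ico c (c + 1))

section UnitIntervals

variable {E : Type*} [NormedAddCommGroup E] {f : ℝ → E} {a : ℝ}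

theorem lintegral_Ici_eq_tsum_lintegral_Ico_add_natCast (F : ℝ → ℝ≥0∞) :
    ∫⁻ x in Ici a, F x = ∑' n : ℕ, ∫⁻ y in Ico 0 1, F (a + n + y) := by
  rw [← iUnion_Ico_add_natCast a,
    lintegral_iUnion (fun _ => measurableSet_Ico) (pairwise_disjoint_Ico_add_natCast a)]
  exact tsum_congr fun n => ((measurePreserving_const_add_restrict_Ico _).lintegral_comp_emb
    (measurableEmbedding_addLeft _) F).symm

theorem IntegrableOn.hasSum_integral_Ico_add_natCast [NormedSpace ℝ E]
    (hf : IntegrableOn f (Ici a)) :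
    HasSum (fun n : ℕ => ∫ y in Ico 0 1, f (a + n + y)) (∫ x in Ici a, f x) := by
  rw [← iUnion_Ico_add_natCast a] at hf ⊢
  convert hasSum_integral_iUnion (fun _ => measurableSet_Ico)
    (pairwise_disjoint_Ico_add_natCast a) hf using 2 with n
  exact (measurePreserving_const_add_restrict_Ico _).integral_comp
    (measurableEmbedding_addLeft _) f

theorem IntegrableOn.integrableOn_Ico_comp_add_natCast (hf : IntegrableOn f (Ici a)) (n : ℕ) :
    IntegrableOn (fun y => f (a + n + y)) (Ico 0 1) := by
  refine ((measurePreserving_const_add_restrict_Ico _).integrable_comp_emb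
    (measurableEmbedding_addLeft _)).2 (hf.mono_set ?_)
  exact Ico_subset_Ici_self.trans (Ici_subset_Ici.2 (le_add_of_nonneg_right n.cast_nonneg))

theorem IntegrableOn.tsum_lintegral_enorm_Ico_add_natCast_ne_top (hf : IntegrableOn f (Ici a)) :
    ∑' n : ℕ, ∫⁻ y in Ico 0 1, ‖f (a + n + y)‖ₑ ≠ ∞ := by
  rw [← lintegral_Ici_eq_tsum_lintegral_Ico_add_natCast (‖f ·‖ₑ)]
  exact hf.2.ne

theorem IntegrableOn.ae_summable_norm_comp_add_natCast (hf : IntegrableOn f (Ici a)) :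
    ∀ᵐ y ∂volume.restrict (Ico 0 1), Summable fun n : ℕ => ‖f (a + n + y)‖ :=
  ae_summable_norm_of_tsum_lintegral_enorm_ne_top
    (fun n => (hf.integrableOn_Ico_comp_add_natCast n).1)
    hf.tsum_lintegral_enorm_Ico_add_natCast_ne_top

theorem IntegrableOn.integral_Ici_eq_integral_Ico_tsum [NormedSpace ℝ E]
    (hf : IntegrableOn f (Ici a)) :
    ∫ x in Ici a, f x = ∫ y in Ico 0 1, ∑' n : ℕ, f (a + n + y) := by
  rw [integral_tsum (fun n => (hf.integrableOn_Ico_comp_add_natCast n).1)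
    hf.tsum_lintegral_enorm_Ico_add_natCast_ne_top, hf.hasSum_integral_Ico_add_natCast.tsum_eq]

theorem IntegrableOn.integrableOn_Ico_tsum_neg_one_pow_mul {g : ℝ → ℝ}
    (hg : IntegrableOn g (Ici a)) :
    IntegrableOn (fun y => ∑' n : ℕ, (-1 : ℝ) ^ n * g (a + n + y)) (Ico 0 1) := by
  refine integrable_tsum_of_tsum_lintegral_enorm_ne_top
    (fun n => (hg.integrableOn_Ico_comp_add_natCast n).1.const_mul _) ?_
  simpa only [enorm_mul, enorm_pow, enorm_neg, enorm_one, one_pow, one_mul] using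
    hg.tsum_lintegral_enorm_Ico_add_natCast_ne_top

end UnitIntervals

end MeasureTheory

theorem norm_cexp_pi_mul_I_mul (x : ℝ) : ‖cexp (π * I * x)‖ = 1 := by
  simpa [mul_comm, mul_left_comm] using norm_exp_ofReal_mul_I (π * x)

theorem cexp_pi_mul_I_mul_int_add_nat_add (m : ℤ) (n : ℕ) (y : ℝ) :
    cexp (π * I * ((m + n + y : ℝ) : ℂ)) = (-1) ^ m * ((-1) ^ n * cexp (π * I * y)) := by
  have harg : (π : ℂ) * I * ((m + n + y : ℝ) : ℂ) =
      m * (π * I) + (n * (π * I) + π * I * y) := by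
    push_cast
    ring
  rw [harg, exp_add, exp_add, exp_int_mul, exp_nat_mul, exp_pi_mul_I]

/-- Longman's method: if `g` is integrable on `[m, ∞)`, then
`∫_m^∞ e^{iπx} g(x) dx = (-1)^m ∫₀¹ e^{iπy} Σ_{l≥0} (-1)^l g(m+l+y) dy`,
where for a.e. `y ∈ [0,1]` the series converges absolutely and the sum is
integrable on `[0,1]`. -/
theorem longman_alternating_series (m : ℤ) (g : ℝ → ℝ)
    (hg : IntegrableOn g (Set.Ici (m : ℝ))) :
    (∀ᵐ y : ℝ, y ∈ Set.Icc (0 : ℝ) 1 →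
      Summable (fun l : ℕ => |g ((m : ℝ) + l + y)|)) ∧
    IntegrableOn (fun y : ℝ => ∑' l : ℕ, (-1 : ℝ) ^ l * g ((m : ℝ) + l + y))
      (Set.Icc (0 : ℝ) 1) ∧
    (∫ x in Set.Ici (m : ℝ),
        Complex.exp ((Real.pi : ℂ) * Complex.I * (x : ℂ)) * (g x : ℂ)) =
      (-1 : ℂ) ^ m *
        ∫ y in (0 : ℝ)..1,
          Complex.exp ((Real.pi : ℂ) * Complex.I * (y : ℂ)) *
            ((∑' l : ℕ, (-1 : ℝ) ^ l * g ((m : ℝ) + l + y) : ℝ) : ℂ) := by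
  refine ⟨?_, (integrableOn_Icc_iff_integrableOn_Ico).2
    hg.integrableOn_Ico_tsum_neg_one_pow_mul, ?_⟩
  · have h := hg.ae_summable_norm_comp_add_natCast
    rw [Measure.restrict_congr_set Ico_ae_eq_Icc, ae_restrict_iff' measurableSet_Icc] at h
    simpa only [Real.norm_eq_abs] using h
  · have hF : IntegrableOn (fun x : ℝ => cexp (π * I * x) * (g x : ℂ)) (Ici (m : ℝ)) :=
      hg.ofReal.bdd_mul (by fun_prop) (ae_of_all _ fun x => (norm_cexp_pi_mul_I_mul x).le)
    rw [hF.integral_Ici_eq_integral_Ico_tsum, intervalIntegral.integral_of_le zero_le_one,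
      ← setIntegral_congr_set Ico_ae_eq_Ioc, ← integral_const_mul]
    congr 1 with y
    simp only [ofReal_tsum, ← tsum_mul_left]
    refine tsum_congr fun n => ?_
    rw [cexp_pi_mul_I_mul_int_add_nat_add]
    push_cast
    ring
end

section
/- Fix a real τ > 0. For each natural number N ≥ 1, let J(N) be the complex line integral of z ↦ exp(iπz + (log z)/z) along the straight segment from 2N·(1 + τi) to 2N, where log is the principal branch of the complex logarithm. Then lim_{N→∞} J(N) = −i/π. -/
open MeasureTheory Filter

/-- The complex line integral of `f` along the straight segment from `w₁` to `w₂`: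
`∫₀¹ f (w₁ + t (w₂ - w₁)) (w₂ - w₁) dt`. -/
noncomputable def segmentIntegral (f : ℂ → ℂ) (w₁ w₂ : ℂ) : ℂ :=
  ∫ t in (0 : ℝ)..1, f (w₁ + (t : ℂ) * (w₂ - w₁)) * (w₂ - w₁)

/-!
Parametrize the segment as `z(t) = 2N + 2Nτ(1 - t) i`. Since `2N` is an even integer,
`exp(iπ z(t)) = exp(a (t - 1))` with `a = 2πNτ`, so the integral equals `-i/π` times
`a ∫₀¹ exp(a (t - 1)) h(t) dt` with `h = exp(log z / z)`. The kernel `a exp(a (t - 1))` has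
mass `1 - exp(-a) → 1`, while `|log z / z| ≤ (log 2N + π) / 2N` on the segment, so `h → 1`
uniformly and the bracket tends to `1`.
-/

open Set Topology Real
open scoped Complex

section ExpKernel

variable {E : Type*} [NormedAddCommGroup E] [NormedSpace ℝ E] [CompleteSpace E]

theorem mul_integral_exp_mul_sub_one (a : ℝ) :
    a * ∫ t in (0 : ℝ)..1, rexp (a * (t - 1)) = 1 - rexp (-a) := by
  simp_rw [mul_sub, mul_one]
  rw [← smul_eq_mul, intervalIntegral.smul_integral_comp_mul_sub (fun x => rexp x), integral_exp]
  simp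

theorem norm_smul_integral_exp_smul_sub_le {a δ : ℝ} (ha : 0 ≤ a) {h : ℝ → E} {v : E}
    (hh : IntervalIntegrable h volume 0 1) (hδ : ∀ t ∈ Icc (0 : ℝ) 1, ‖h t - v‖ ≤ δ) :
    ‖a • (∫ t in (0 : ℝ)..1, rexp (a * (t - 1)) • h t) - (1 - rexp (-a)) • v‖ ≤
      δ * (1 - rexp (-a)) := by
  have hexp : Continuous fun t : ℝ => rexp (a * (t - 1)) := by fun_prop
  have hdiff : a • (∫ t in (0 : ℝ)..1, rexp (a * (t - 1)) • h t) - (1 - rexp (-a)) • v =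
      a • ∫ t in (0 : ℝ)..1, rexp (a * (t - 1)) • (h t - v) := by
    simp_rw [smul_sub]
    rw [intervalIntegral.integral_sub (hh.continuousOn_smul hexp.continuousOn)
        ((hexp.intervalIntegrable 0 1).smul_continuousOn continuousOn_const),
      intervalIntegral.integral_smul_const, smul_sub, smul_smul, ← smul_eq_mul,
      ← mul_integral_exp_mul_sub_one]
    rfl
  have hnorm : ‖∫ t in (0 : ℝ)..1, rexp (a * (t - 1)) • (h t - v)‖ ≤
      ∫ t in (0 : ℝ)..1, rexp (a * (t - 1)) * δ := by
    refine intervalIntegral.norm_integral_le_of_norm_le zero_le_one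
      (Eventually.of_forall fun t ht => ?_) ((hexp.mul continuous_const).intervalIntegrable 0 1)
    rw [norm_smul, Real.norm_of_nonneg (exp_nonneg _)]
    exact mul_le_mul_of_nonneg_left (hδ t (Ioc_subset_Icc_self ht)) (exp_nonneg _)
  calc _ = a * ‖∫ t in (0 : ℝ)..1, rexp (a * (t - 1)) • (h t - v)‖ := by
        rw [hdiff, norm_smul, Real.norm_of_nonneg ha]
    _ ≤ a * ∫ t in (0 : ℝ)..1, rexp (a * (t - 1)) * δ := mul_le_mul_of_nonneg_left hnorm ha
    _ = δ * (1 - rexp (-a)) := by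
        rw [intervalIntegral.integral_mul_const, ← mul_assoc, mul_integral_exp_mul_sub_one,
          mul_comm]

theorem tendsto_smul_integral_exp_smul {ι : Type*} {l : Filter ι} {a δ : ι → ℝ}
    {h : ι → ℝ → E} {v : E} (ha : Tendsto a l atTop) (hδ : Tendsto δ l (𝓝 0))
    (hh : ∀ᶠ i in l, IntervalIntegrable (h i) volume 0 1)
    (hbound : ∀ᶠ i in l, ∀ t ∈ Icc (0 : ℝ) 1, ‖h i t - v‖ ≤ δ i) :
    Tendsto (fun i => a i • ∫ t in (0 : ℝ)..1, rexp (a i * (t - 1)) • h i t) l (𝓝 v) := by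
  have hmass : Tendsto (fun i => 1 - rexp (-a i)) l (𝓝 1) := by
    simpa using (tendsto_exp_neg_atTop_nhds_zero.comp ha).const_sub 1
  have herr : Tendsto (fun i => a i • (∫ t in (0 : ℝ)..1, rexp (a i * (t - 1)) • h i t) -
      (1 - rexp (-a i)) • v) l (𝓝 0) := by
    refine squeeze_zero_norm' ?_ (by simpa using hδ.mul hmass)
    filter_upwards [ha.eventually_ge_atTop 0, hh, hbound] with i hai hhi hbi
    exact norm_smul_integral_exp_smul_sub_le hai hhi hbi
  simpa using herr.add (hmass.smul_const v)

end ExpKernel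

theorem Complex.norm_log_div_self_le {z : ℂ} {R : ℝ} (hR : rexp 1 ≤ R) (hRz : R ≤ ‖z‖) :
    ‖Complex.log z / z‖ ≤ (Real.log R + π) / R := by
  have hR0 : 0 < R := (exp_pos 1).trans_le hR
  have hz : 0 < ‖z‖ := hR0.trans_le hRz
  have hlog : ‖Complex.log z‖ ≤ Real.log ‖z‖ + π := by
    refine (Complex.norm_le_abs_re_add_abs_im _).trans ?_
    rw [Complex.log_re, Complex.log_im, abs_of_nonneg (Real.log_nonneg ?_)]
    · exact add_le_add_right (Complex.abs_arg_le_pi z) _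
    · exact (one_le_exp zero_le_one).trans (hR.trans hRz)
  calc ‖Complex.log z / z‖ ≤ (Real.log ‖z‖ + π) / ‖z‖ := by
        rw [norm_div]; exact div_le_div_of_nonneg_right hlog hz.le
    _ = Real.log ‖z‖ / ‖z‖ + π / ‖z‖ := add_div _ _ _
    _ ≤ Real.log R / R + π / R := add_le_add
        (log_div_self_antitoneOn hR (hR.trans hRz) hRz)
        (div_le_div_of_nonneg_left pi_pos.le hR0 hRz)
    _ = (Real.log R + π) / R := (add_div _ _ _).symm

theorem Complex.norm_exp_log_div_self_sub_one_le {z : ℂ} {R : ℝ} (hR : rexp 1 ≤ R)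
    (hRz : R ≤ ‖z‖) (hR1 : (Real.log R + π) / R ≤ 1) :
    ‖cexp (Complex.log z / z) - 1‖ ≤ 2 * ((Real.log R + π) / R) := by
  have h := Complex.norm_log_div_self_le hR hRz
  exact (Complex.norm_exp_sub_one_le (h.trans hR1)).trans (by gcongr)

theorem tendsto_log_add_div_self_atTop (c : ℝ) :
    Tendsto (fun x => (Real.log x + c) / x) atTop (𝓝 0) := by
  have hlog := tendsto_pow_log_div_mul_add_atTop 1 0 1 one_ne_zero
  simp only [pow_one, one_mul, add_zero] at hlog
  simpa [add_div] using
    hlog.add ((tendsto_const_nhds (x := c)).div_atTop tendsto_id)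

theorem segmentIntegral_exp_I_mul_pi_mul_add (g : ℂ → ℂ) (n : ℤ) (b : ℝ) :
    segmentIntegral (fun z => cexp (Complex.I * π * z + g z)) (2 * n + b * Complex.I) (2 * n) =
      -Complex.I / π * ((π * b) • ∫ t in (0 : ℝ)..1,
        rexp (π * b * (t - 1)) • cexp (g (2 * n + ↑(b * (1 - t)) * Complex.I))) := by
  have hpoint : ∀ t : ℝ, 2 * n + b * Complex.I + t * (2 * n - (2 * n + b * Complex.I)) =
      2 * n + ↑(b * (1 - t)) * Complex.I := fun t => by push_cast; ring
  have hphase : ∀ t : ℝ, Complex.I * π * (2 * n + ↑(b * (1 - t)) * Complex.I) =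
      n * (2 * π * Complex.I) + ↑(π * b * (t - 1)) := fun t => by
    push_cast; ring_nf; rw [Complex.I_sq]; ring
  have hintegrand : ∀ t : ℝ, cexp (Complex.I * π * (2 * n + ↑(b * (1 - t)) * Complex.I) +
      g (2 * n + ↑(b * (1 - t)) * Complex.I)) =
      rexp (π * b * (t - 1)) • cexp (g (2 * n + ↑(b * (1 - t)) * Complex.I)) := fun t => by
    rw [Complex.exp_add, hphase, Complex.exp_add, Complex.exp_int_mul_two_pi_mul_I, one_mul,
      Complex.real_smul, Complex.ofReal_exp]
  simp only [segmentIntegral, hpoint, hintegrand, intervalIntegral.integral_mul_const]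
  rw [Complex.real_smul, ← mul_assoc, mul_comm]
  congr 1
  have hπ : (π : ℂ) ≠ 0 := Complex.ofReal_ne_zero.mpr pi_ne_zero
  push_cast
  field_simp
  ring

/-- For `τ > 0`, the line integral of `z ↦ exp(iπz + log z / z)` along the segment
from `2N(1+τi)` to `2N` tends to `-i/π` as `N → ∞`. -/
theorem short_leg_limit (τ : ℝ) (hτ : 0 < τ) :
    Tendsto
      (fun N : ℕ =>
        segmentIntegral
          (fun z : ℂ => Complex.exp (Complex.I * (Real.pi : ℂ) * z + Complex.log z / z))
          ((2 * N : ℂ) * (1 + (τ : ℂ) * Complex.I)) (2 * N : ℂ))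
      atTop (nhds (-Complex.I / (Real.pi : ℂ))) := by
  set z : ℕ → ℝ → ℂ := fun N t => 2 * N + ↑(2 * N * τ * (1 - t)) * Complex.I with hz
  have hrepr : ∀ N : ℕ, segmentIntegral (fun z => cexp (Complex.I * π * z + Complex.log z / z))
      ((2 * N : ℂ) * (1 + τ * Complex.I)) (2 * N) = -Complex.I / π * ((π * (2 * N * τ)) •
        ∫ t in (0 : ℝ)..1,
          rexp (π * (2 * N * τ) * (t - 1)) • cexp (Complex.log (z N t) / z N t)) :=
    fun N => by
      have hstart : (2 * N : ℂ) * (1 + τ * Complex.I) =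
          2 * ((N : ℤ) : ℂ) + ↑(2 * N * τ) * Complex.I := by push_cast; ring
      simpa [hstart, hz] using
        segmentIntegral_exp_I_mul_pi_mul_add (fun z => Complex.log z / z) N (2 * N * τ)
  have hre : ∀ N t, (z N t).re = 2 * N := fun N t => by simp [hz]
  have hR : Tendsto (fun N : ℕ => 2 * (N : ℝ)) atTop atTop :=
    tendsto_natCast_atTop_atTop.const_mul_atTop two_pos
  have hε := (tendsto_log_add_div_self_atTop π).comp hR
  have hint : ∀ᶠ N : ℕ in atTop,
      IntervalIntegrable (fun t => cexp (Complex.log (z N t) / z N t)) volume 0 1 := by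
    filter_upwards [eventually_gt_atTop 0] with N hN
    have hslit : ∀ t, z N t ∈ Complex.slitPlane := fun t =>
      Complex.mem_slitPlane_iff.mpr (Or.inl (by rw [hre]; positivity))
    have hzc : Continuous (z N) := by fun_prop
    exact (((hzc.clog hslit).div hzc fun t => Complex.slitPlane_ne_zero (hslit t)).cexp)
      |>.intervalIntegrable 0 1
  have hbound : ∀ᶠ N : ℕ in atTop, ∀ t ∈ Icc (0 : ℝ) 1,
      ‖cexp (Complex.log (z N t) / z N t) - 1‖ ≤ 2 * ((Real.log (2 * N) + π) / (2 * N)) := by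
    filter_upwards [hR.eventually_ge_atTop (rexp 1), hε.eventually (ge_mem_nhds one_pos)]
      with N hN hεN t _
    exact Complex.norm_exp_log_div_self_sub_one_le hN
      ((hre N t).ge.trans (Complex.re_le_norm _)) hεN
  simp only [hrepr]
  simpa using (tendsto_smul_integral_exp_smul ((hR.atTop_mul_const hτ).const_mul_atTop pi_pos)
    (by simpa using hε.const_mul 2) hint hbound).const_mul (-Complex.I / π)
end

section
/- Fix a real τ > 0. For each natural number N ≥ 1, let H(N) be the complex line integral of z ↦ exp(iπz + (log z)/z) along the straight segment from 1 to 2N·(1 + τi), where log is the principal branch of the complex logarithm. Then lim_{N→∞} H(N) exists, and M_I = −i/π + lim_{N→∞} H(N), where M_I := lim_{N→∞, N∈ℕ} ∫₁^{2N} e^{iπx} · x^(1/x) dx. -/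
open MeasureTheory Filter

/-!
The integrand `f z = exp (iπz + log z / z)` is holomorphic on the right half-plane, which is
exhausted by the discs `ball R R`; on such a disc `f` has a primitive, so the integral along
`[1, 2N(1 + τi)]` is the integral along `[1, 2N]` plus the one along the vertical side
`[2N, 2N(1 + τi)]`. On that side `z = 2N + iy` and `exp (iπz) = exp (-πy)`, while
`exp (log z / z) → 1` uniformly as `|z| → ∞`, so the vertical integral tends to
`i ∫₀^∞ exp (-πy) dy = i/π`.
-/

open Complex Metric Set Topology

theorem segmentIntegral_add_mul (f : ℂ → ℂ) (w u : ℂ) (h : ℝ) :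
    segmentIntegral f w (w + h * u) = u * ∫ s in (0 : ℝ)..h, f (w + s * u) := by
  calc segmentIntegral f w (w + h * u)
      = h * u * ∫ t in (0 : ℝ)..1, f (w + ((h * t : ℝ) : ℂ) * u) := by
        rw [segmentIntegral, add_sub_cancel_left, intervalIntegral.integral_mul_const, mul_comm]
        congr 1
        refine intervalIntegral.integral_congr fun t _ => ?_
        push_cast
        ring_nf
    _ = u * (h • ∫ t in (0 : ℝ)..1, f (w + ((h * t : ℝ) : ℂ) * u)) := by
        rw [real_smul]
        ring
    _ = u * ∫ s in (0 : ℝ)..h, f (w + s * u) := by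
        rw [intervalIntegral.smul_integral_comp_mul_left (fun s : ℝ => f (w + s * u))]
        simp

theorem segmentIntegral_ofReal (f : ℂ → ℂ) (a b : ℝ) :
    segmentIntegral f a b = ∫ x in a..b, f x := by
  have h₁ := segmentIntegral_add_mul f a 1 (b - a)
  have h₂ := intervalIntegral.integral_comp_add_left (fun x : ℝ => f x) a (a := 0) (b := b - a)
  push_cast at h₁ h₂
  simp only [mul_one, one_mul, add_sub_cancel, add_zero] at h₁ h₂
  rw [h₁, h₂]

theorem segmentIntegral_eq_sub_of_hasDerivAt {f g : ℂ → ℂ} {w₁ w₂ : ℂ}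
    (hg : ∀ z ∈ segment ℝ w₁ w₂, HasDerivAt g (f z) z)
    (hf : ContinuousOn f (segment ℝ w₁ w₂)) :
    segmentIntegral f w₁ w₂ = g w₂ - g w₁ := by
  let γ : ℝ → ℂ := fun t => w₁ + t * (w₂ - w₁)
  have hγ : MapsTo γ (Icc 0 1) (segment ℝ w₁ w₂) := fun t ht => by
    rw [segment_eq_image']
    exact ⟨t, ht, by simp [γ, real_smul]⟩
  have hγ' (t : ℝ) : HasDerivAt γ (w₂ - w₁) t := by
    simpa [γ] using ((hasDerivAt_id t).ofReal_comp.mul_const (w₂ - w₁)).const_add w₁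
  have hderiv : ∀ t ∈ uIcc (0 : ℝ) 1, HasDerivAt (g ∘ γ) (f (γ t) * (w₂ - w₁)) t := by
    intro t ht
    rw [uIcc_of_le zero_le_one] at ht
    exact (hg _ (hγ ht)).comp t (hγ' t)
  have hint : IntervalIntegrable (fun t => f (γ t) * (w₂ - w₁)) volume 0 1 := by
    refine (ContinuousOn.mul ?_ continuousOn_const).intervalIntegrable
    rw [uIcc_of_le zero_le_one]
    exact hf.comp (by fun_prop) hγ
  rw [segmentIntegral, intervalIntegral.integral_eq_sub_of_hasDerivAt hderiv hint]
  simp [γ]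

theorem segmentIntegral_add_segmentIntegral_of_ball {f : ℂ → ℂ} {c : ℂ} {r : ℝ}
    (hf : DifferentiableOn ℂ f (ball c r)) {a b d : ℂ} (ha : a ∈ ball c r) (hb : b ∈ ball c r)
    (hd : d ∈ ball c r) :
    segmentIntegral f a b + segmentIntegral f b d = segmentIntegral f a d := by
  obtain ⟨g, hg⟩ := hf.isExactOn_ball
  have key {w₁ w₂ : ℂ} (h₁ : w₁ ∈ ball c r) (h₂ : w₂ ∈ ball c r) :
      segmentIntegral f w₁ w₂ = g w₂ - g w₁ :=
    have hseg := (convex_ball c r).segment_subset h₁ h₂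
    segmentIntegral_eq_sub_of_hasDerivAt (fun z hz => hg z (hseg hz))
      (hf.continuousOn.mono hseg)
  rw [key ha hb, key hb hd, key ha hd]
  ring

theorem mem_ball_ofReal_self_iff {R : ℝ} (hR : 0 ≤ R) {z : ℂ} :
    z ∈ ball (R : ℂ) R ↔ ‖z‖ ^ 2 < 2 * R * z.re := by
  rw [mem_ball, dist_eq_norm, ← pow_lt_pow_iff_left₀ (norm_nonneg _) hR two_ne_zero,
    Complex.sq_norm, Complex.sq_norm, normSq_apply, normSq_apply]
  simp only [sub_re, ofReal_re, sub_im, ofReal_im, sub_zero]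
  constructor <;> intro h <;> nlinarith

theorem re_pos_of_mem_ball_ofReal_self {R : ℝ} {z : ℂ} (hz : z ∈ ball (R : ℂ) R) : 0 < z.re := by
  have hR : 0 ≤ R := (pos_of_mem_ball hz).le
  have := (mem_ball_ofReal_self_iff hR).1 hz
  nlinarith [norm_nonneg z, sq_nonneg ‖z‖]

theorem IsCompact.exists_subset_ball_ofReal_self {K : Set ℂ} (hK : IsCompact K)
    (hre : ∀ z ∈ K, 0 < z.re) : ∃ R : ℝ, K ⊆ ball (R : ℂ) R := by
  have hmono : Monotone fun n : ℕ => ball ((n : ℝ) : ℂ) n := by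
    intro m n hmn z hz
    have hm := (mem_ball_ofReal_self_iff m.cast_nonneg).1 hz
    have hmn' : (m : ℝ) ≤ n := by exact_mod_cast hmn
    exact (mem_ball_ofReal_self_iff n.cast_nonneg).2
      (hm.trans_le (by gcongr; exact (re_pos_of_mem_ball_ofReal_self hz).le))
  have hcover : K ⊆ ⋃ n : ℕ, ball ((n : ℝ) : ℂ) n := by
    intro z hz
    obtain ⟨n, hn⟩ := exists_nat_gt (‖z‖ ^ 2 / (2 * z.re))
    refine mem_iUnion.2 ⟨n, (mem_ball_ofReal_self_iff n.cast_nonneg).2 ?_⟩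
    rw [div_lt_iff₀ (by linarith [hre z hz])] at hn
    linarith
  obtain ⟨n, hn⟩ := hK.elim_directed_cover _ (fun _ => isOpen_ball) hcover hmono.directed_le
  exact ⟨n, hn⟩

theorem segmentIntegral_add_segmentIntegral_of_re_pos {f : ℂ → ℂ}
    (hf : DifferentiableOn ℂ f {z | 0 < z.re}) {a b d : ℂ} (ha : 0 < a.re) (hb : 0 < b.re)
    (hd : 0 < d.re) :
    segmentIntegral f a b + segmentIntegral f b d = segmentIntegral f a d := by
  obtain ⟨R, hR⟩ := (Set.toFinite {a, b, d}).isCompact.exists_subset_ball_ofReal_self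
    (by simp [ha, hb, hd])
  have hball : ball (R : ℂ) R ⊆ {z | 0 < z.re} := fun _ => re_pos_of_mem_ball_ofReal_self
  exact segmentIntegral_add_segmentIntegral_of_ball (hf.mono hball) (hR (by simp))
    (hR (by simp)) (hR (by simp))

theorem tendsto_log_div_self_cobounded :
    Tendsto (fun z : ℂ => log z / z) (Bornology.cobounded ℂ) (𝓝 0) := by
  have hbound (z : ℂ) : ‖log z / z‖ ≤ (|Real.log ‖z‖| + Real.pi) / ‖z‖ := by
    rw [norm_div]
    gcongr
    calc ‖log z‖ ≤ |(log z).re| + |(log z).im| := norm_le_abs_re_add_abs_im _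
      _ ≤ |Real.log ‖z‖| + Real.pi := by rw [log_re, log_im]; gcongr; exact abs_arg_le_pi z
  have hlog : Tendsto (fun r : ℝ => Real.log r / r) atTop (𝓝 0) := by
    simpa using Real.tendsto_pow_log_div_mul_add_atTop 1 0 1 one_ne_zero
  have hreal : Tendsto (fun r : ℝ => (|Real.log r| + Real.pi) / r) atTop (𝓝 0) := by
    have hsum := hlog.add ((tendsto_const_nhds (x := Real.pi)).div_atTop tendsto_id)
    rw [add_zero] at hsum
    refine hsum.congr' ?_
    filter_upwards [eventually_ge_atTop 1] with r hr
    rw [abs_of_nonneg (Real.log_nonneg hr), add_div, id]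
  exact squeeze_zero_norm hbound (hreal.comp tendsto_norm_cobounded_atTop)

theorem integral_exp_neg_mul {a : ℝ} (ha : 0 < a) (h : ℝ) :
    ∫ y in (0 : ℝ)..h, Real.exp (-a * y) = (1 - Real.exp (-a * h)) / a := by
  rw [intervalIntegral.integral_comp_mul_left Real.exp (neg_ne_zero.2 ha.ne'), integral_exp,
    mul_zero, Real.exp_zero, smul_eq_mul]
  field_simp
  ring

theorem norm_integral_exp_neg_mul_sub_le {a h η : ℝ} (ha : 0 < a) (hh : 0 ≤ h) {φ : ℝ → ℂ}
    (hφi : IntervalIntegrable φ volume 0 h) (hφ : ∀ y ∈ Icc 0 h, ‖φ y - 1‖ ≤ η) :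
    ‖(∫ y in (0 : ℝ)..h, Real.exp (-a * y) * φ y) - ((1 - Real.exp (-a * h)) / a : ℝ)‖ ≤
      η / a := by
  have hη : 0 ≤ η := (norm_nonneg _).trans (hφ 0 ⟨le_rfl, hh⟩)
  have hk : Continuous fun y : ℝ => (Real.exp (-a * y) : ℂ) := by fun_prop
  have hsplit : (∫ y in (0 : ℝ)..h, Real.exp (-a * y) * φ y) - ((1 - Real.exp (-a * h)) / a : ℝ) =
      ∫ y in (0 : ℝ)..h, Real.exp (-a * y) * (φ y - 1) := by
    simp_rw [mul_sub, mul_one]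
    rw [intervalIntegral.integral_sub (hφi.continuousOn_mul hk.continuousOn)
      (hk.intervalIntegrable _ _), intervalIntegral.integral_ofReal, integral_exp_neg_mul ha]
  calc _ = ‖∫ y in (0 : ℝ)..h, Real.exp (-a * y) * (φ y - 1)‖ := by rw [hsplit]
    _ ≤ ∫ y in (0 : ℝ)..h, Real.exp (-a * y) * η := by
        refine intervalIntegral.norm_integral_le_of_norm_le hh (ae_of_all _ fun y hy => ?_)
          (Continuous.intervalIntegrable (by fun_prop) _ _)
        rw [norm_mul, norm_real, Real.norm_of_nonneg (Real.exp_pos _).le]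
        gcongr
        exact hφ y (Ioc_subset_Icc_self hy)
    _ = (1 - Real.exp (-a * h)) / a * η := by
        rw [intervalIntegral.integral_mul_const, integral_exp_neg_mul ha]
    _ ≤ η / a := by
        rw [div_mul_eq_mul_div]
        exact div_le_div_of_nonneg_right
          (mul_le_of_le_one_left hη (by linarith [Real.exp_pos (-a * h)])) ha.le

theorem tendsto_integral_exp_neg_mul_vertical {a : ℝ} (ha : 0 < a) {g : ℂ → ℂ}
    (hg : Tendsto g (Bornology.cobounded ℂ) (𝓝 1)) (hgc : ContinuousOn g {z | 0 < z.re})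
    {ι : Type*} {l : Filter ι} {x h : ι → ℝ} (hx : Tendsto x l atTop) (hh : Tendsto h l atTop) :
    Tendsto (fun i => ∫ y in (0 : ℝ)..h i, Real.exp (-a * y) * g (x i + y * I)) l
      (𝓝 (a⁻¹ : ℝ)) := by
  rw [Metric.tendsto_nhds]
  intro ε hε
  obtain ⟨R, -, hR⟩ := Filter.hasBasis_cobounded_norm.eventually_iff.1
    (hg.eventually (closedBall_mem_nhds 1 (by positivity : 0 < a * ε / 2)))
  have htail : Tendsto (fun i => Real.exp (-a * h i) / a) l (𝓝 0) := by
    simpa using (Real.tendsto_exp_atBot.comp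
      (hh.const_mul_atTop_of_neg (neg_neg_of_pos ha))).div_const a
  filter_upwards [hx.eventually_gt_atTop (max R 0), hh.eventually_ge_atTop 0,
    htail.eventually (gt_mem_nhds (half_pos hε))] with i hxi hhi htaili
  have hline (y : ℝ) : (x i + y * I).re = x i := by simp
  have hφ : ∀ y ∈ Icc 0 (h i), ‖g (x i + y * I) - 1‖ ≤ a * ε / 2 := fun y _ => by
    rw [← dist_eq_norm]
    refine hR (le_trans ?_ (abs_re_le_norm _))
    rw [hline]
    exact (le_max_left _ _).trans (hxi.le.trans (le_abs_self _))
  have hint : IntervalIntegrable (fun y : ℝ => g (x i + y * I)) volume 0 (h i) :=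
    (hgc.comp_continuous (by fun_prop) fun y : ℝ =>
      show 0 < (x i + (y : ℂ) * I).re by
        rw [hline]; exact (le_max_right _ _).trans_lt hxi).intervalIntegrable _ _
  have hmain := norm_integral_exp_neg_mul_sub_le ha hhi hint hφ
  have htail_eq : (((1 - Real.exp (-a * h i)) / a : ℝ) : ℂ) - (a⁻¹ : ℝ) =
      ((-(Real.exp (-a * h i) / a)) : ℝ) := by
    push_cast
    ring
  rw [dist_eq_norm]
  calc _ = ‖((∫ y in (0 : ℝ)..h i, Real.exp (-a * y) * g (x i + y * I)) -
          (((1 - Real.exp (-a * h i)) / a : ℝ) : ℂ)) +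
          ((((1 - Real.exp (-a * h i)) / a : ℝ) : ℂ) - (a⁻¹ : ℝ))‖ := by
          rw [sub_add_sub_cancel]
    _ ≤ a * ε / 2 / a + Real.exp (-a * h i) / a := by
        refine (norm_add_le _ _).trans (add_le_add hmain ?_)
        rw [htail_eq, norm_real, norm_neg, Real.norm_of_nonneg (by positivity)]
    _ < ε := by
        rw [mul_div_assoc, mul_div_cancel_left₀ _ ha.ne']
        linarith

theorem differentiableOn_log_div_self :
    DifferentiableOn ℂ (fun z : ℂ => log z / z) slitPlane := fun _ hz =>
  ((differentiableAt_log hz).div differentiableAt_id (slitPlane_ne_zero hz)).differentiableWithinAt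

theorem segmentIntegral_one_ofReal_eq_integral {b : ℝ} (hb : 0 ≤ b) :
    segmentIntegral (fun z => exp (I * Real.pi * z + log z / z)) 1 b =
      ∫ x in (1 : ℝ)..b, exp (Real.pi * I * x) * (Real.exp (Real.log x / x) : ℂ) := by
  rw [← ofReal_one, segmentIntegral_ofReal]
  refine intervalIntegral.integral_congr fun x hx => ?_
  have hx₀ : 0 ≤ x := (le_min zero_le_one hb).trans hx.1
  rw [exp_add, ofReal_exp, ofReal_div, ofReal_log hx₀, mul_comm I]

theorem exp_I_mul_pi_mul_two_mul_nat_add (N : ℕ) (y : ℝ) (w : ℂ) :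
    exp (I * Real.pi * (2 * N + y * I) + w) = Real.exp (-Real.pi * y) * exp w := by
  have harg : I * Real.pi * (2 * N + y * I) = N * (2 * Real.pi * I) + (-Real.pi * y : ℝ) := by
    push_cast
    linear_combination (Real.pi * y : ℂ) * I_sq
  rw [harg, exp_add, exp_add, exp_nat_mul_two_pi_mul_I, one_mul, ofReal_exp]

theorem tendsto_segmentIntegral_vertical {τ : ℝ} (hτ : 0 < τ) :
    Tendsto (fun N : ℕ => segmentIntegral (fun z => exp (I * Real.pi * z + log z / z))
      (2 * N) (2 * N * (1 + τ * I))) atTop (𝓝 (I / Real.pi)) := by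
  have hg : Tendsto (fun z : ℂ => exp (log z / z)) (Bornology.cobounded ℂ) (𝓝 1) := by
    simpa using tendsto_log_div_self_cobounded.cexp
  have hgc : ContinuousOn (fun z : ℂ => exp (log z / z)) {z | 0 < z.re} :=
    differentiableOn_log_div_self.cexp.continuousOn.mono fun _ hz => Or.inl hz
  have h2N : Tendsto (fun N : ℕ => 2 * (N : ℝ)) atTop atTop :=
    tendsto_natCast_atTop_atTop.const_mul_atTop two_pos
  have hlim := (tendsto_integral_exp_neg_mul_vertical Real.pi_pos hg hgc h2N
    (h2N.atTop_mul_const hτ)).const_mul I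
  rw [ofReal_inv, ← div_eq_mul_inv] at hlim
  refine hlim.congr fun N => ?_
  have hend : 2 * N * (1 + τ * I) = 2 * N + ((2 * N * τ : ℝ) : ℂ) * I := by push_cast; ring
  rw [hend, segmentIntegral_add_mul]
  congr 1
  refine intervalIntegral.integral_congr fun y _ => ?_
  simp only [ofReal_mul, ofReal_ofNat, ofReal_natCast]
  exact (exp_I_mul_pi_mul_two_mul_nat_add N y _).symm

/-- For `τ > 0`, with `H N` the line integral of `z ↦ exp(iπz + log z / z)` along the
segment from `1` to `2N(1+τi)`, the limit `lim_{N→∞} H N` exists and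
`M_I = -i/π + lim_{N→∞} H N`, where `M_I = lim_{N→∞} ∫₁^{2N} e^{iπx} x^(1/x) dx`. -/
theorem contour_deformation (τ : ℝ) (hτ : 0 < τ) (M_I : ℂ)
    (hM : Tendsto
      (fun N : ℕ => ∫ x in (1 : ℝ)..(2 * N : ℝ),
        Complex.exp ((Real.pi : ℂ) * Complex.I * (x : ℂ)) *
          (Real.exp (Real.log x / x) : ℂ))
      atTop (nhds M_I)) :
    ∃ L : ℂ,
      Tendsto
        (fun N : ℕ =>
          segmentIntegral
            (fun z : ℂ => Complex.exp (Complex.I * (Real.pi : ℂ) * z + Complex.log z / z))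
            1 ((2 * N : ℂ) * (1 + (τ : ℂ) * Complex.I)))
        atTop (nhds L) ∧
      M_I = -Complex.I / (Real.pi : ℂ) + L := by
  refine ⟨M_I + I / Real.pi, ?_, by ring⟩
  have hf : DifferentiableOn ℂ (fun z : ℂ => exp (I * Real.pi * z + log z / z))
      {z | 0 < z.re} :=
    ((differentiableOn_const _).mul differentiableOn_id).add
      (differentiableOn_log_div_self.mono fun _ hz => Or.inl hz) |>.cexp
  refine (hM.add (tendsto_segmentIntegral_vertical hτ)).congr' ?_
  filter_upwards [eventually_gt_atTop 0] with N hN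
  have hreal := segmentIntegral_one_ofReal_eq_integral (b := 2 * N) (by positivity)
  rw [show ((2 * N : ℝ) : ℂ) = 2 * N by push_cast; rfl] at hreal
  rw [← hreal, segmentIntegral_add_segmentIntegral_of_re_pos hf] <;> simp [hN]
end

section
/- For every real number a, ∫₀¹ sin(a·x) · (ln x)/x dx = −a · Σ_{n=0}^∞ (−1)^n · a^{2n} / ((2n+1)! · (2n+1)²), the integral being absolutely convergent and the series absolutely convergent. -/
/-!
Expand `sin (a x) / x = a ∑ cₙ x^(2n)` with `cₙ = (-1)ⁿ a^(2n) / (2n+1)!` and integrate term by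
term against `log x`, using `∫₀¹ xᵏ log x dx = -1/(k+1)²`. Since `xᵏ log x ≤ 0` on `(0, 1]`, the
same computation gives the `L¹` norms `|cₙ| / (2n+1)²` of the terms, which are summable because
`∑ |cₙ|` is dominated by the series of `cosh |a|`; this justifies exchanging sum and integral.
Integrability itself follows from `|sin (a x)| ≤ |a| x`.
-/

open MeasureTheory Real Set

lemma integrableOn_pow_mul_log (n : ℕ) : IntegrableOn (fun x : ℝ => x ^ n * log x) (Ioc 0 1) :=
  intervalIntegral.intervalIntegrable_log'.1.continuousOn_mul_of_subset
    (continuous_pow n).continuousOn isCompact_Icc measurableSet_Ioc Ioc_subset_Icc_self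

lemma integral_pow_mul_log (n : ℕ) :
    ∫ x in Ioc 0 1, x ^ n * log x = -1 / ((n : ℝ) + 1) ^ 2 := by
  have hn : (n : ℝ) + 1 ≠ 0 := by positivity
  let F : ℝ → ℝ := fun x => x ^ (n + 1) * log x / (n + 1) - x ^ (n + 1) / (n + 1) ^ 2
  -- `x * log x` is continuous on all of `ℝ` (with `log 0 = 0`), hence so is `F`.
  have hF_cont : Continuous F := by
    have hF : F = fun x => x ^ n * (x * log x) / (n + 1) - x ^ (n + 1) / (n + 1) ^ 2 := by
      funext x; simp only [F]; ring
    rw [hF]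
    fun_prop (disch := exact continuous_mul_log)
  have hF_deriv : ∀ x ∈ Ioo (0 : ℝ) 1, HasDerivAt F (x ^ n * log x) x := by
    intro x hx
    have h := (((hasDerivAt_pow (n + 1) x).mul (hasDerivAt_log hx.1.ne')).div_const
      ((n : ℝ) + 1)).sub ((hasDerivAt_pow (n + 1) x).div_const (((n : ℝ) + 1) ^ 2))
    refine h.congr_deriv ?_
    simp only [Nat.add_sub_cancel]
    field_simp [hx.1.ne']
    push_cast
    ring
  rw [← intervalIntegral.integral_of_le zero_le_one,
    intervalIntegral.integral_eq_sub_of_hasDerivAt_of_le zero_le_one hF_cont.continuousOn hF_deriv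
      ((intervalIntegrable_iff_integrableOn_Ioc_of_le zero_le_one).2 (integrableOn_pow_mul_log n))]
  simp [F]
  field_simp

lemma integral_abs_pow_mul_log (n : ℕ) :
    ∫ x in Ioc 0 1, |x ^ n * log x| = 1 / ((n : ℝ) + 1) ^ 2 := by
  have h : ∀ x ∈ Ioc (0 : ℝ) 1, |x ^ n * log x| = -(x ^ n * log x) := fun x hx =>
    abs_of_nonpos (mul_nonpos_of_nonneg_of_nonpos (pow_nonneg hx.1.le n) (log_nonpos hx.1.le hx.2))
  rw [setIntegral_congr_fun measurableSet_Ioc h, integral_neg, integral_pow_mul_log, neg_div,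
    neg_neg]

lemma div_natCast_add_one_sq_le {c : ℝ} (hc : 0 ≤ c) (m : ℕ) : c / ((m : ℝ) + 1) ^ 2 ≤ c :=
  div_le_self hc (by nlinarith [m.cast_nonneg (α := ℝ)])

theorem hasSum_integral_tsum_mul_pow_mul_log {c : ℕ → ℝ} (hc : Summable fun n => |c n|)
    (k : ℕ → ℕ) :
    HasSum (fun n => -(c n / ((k n : ℝ) + 1) ^ 2))
      (∫ x in Ioc 0 1, (∑' n, c n * x ^ k n) * log x) := by
  have hF_int (n : ℕ) : IntegrableOn (fun x => c n * (x ^ k n * log x)) (Ioc 0 1) :=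
    (integrableOn_pow_mul_log (k n)).const_mul (c n)
  have hF_norm (n : ℕ) :
      ∫ x in Ioc 0 1, ‖c n * (x ^ k n * log x)‖ = |c n| / ((k n : ℝ) + 1) ^ 2 := by
    simp only [norm_eq_abs, abs_mul (c n)]
    rw [integral_const_mul, integral_abs_pow_mul_log, mul_one_div]
  have hF_sum : Summable fun n => ∫ x in Ioc 0 1, ‖c n * (x ^ k n * log x)‖ := by
    refine hc.of_nonneg_of_le (fun n => by positivity) fun n => ?_
    rw [hF_norm]
    exact div_natCast_add_one_sq_le (abs_nonneg _) (k n)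
  have h_int (n : ℕ) :
      ∫ x in Ioc 0 1, c n * (x ^ k n * log x) = -(c n / ((k n : ℝ) + 1) ^ 2) := by
    rw [integral_const_mul, integral_pow_mul_log, mul_div, mul_neg_one, neg_div]
  have h_tsum (x : ℝ) : ∑' n, c n * (x ^ k n * log x) = (∑' n, c n * x ^ k n) * log x := by
    simp only [← mul_assoc, tsum_mul_right]
  simpa only [h_int, h_tsum] using hasSum_integral_of_summable_integral_norm hF_int hF_sum

noncomputable def sinDivCoeff (a : ℝ) (n : ℕ) : ℝ :=
  (-1) ^ n * a ^ (2 * n) / (2 * n + 1).factorial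

lemma summable_abs_sinDivCoeff (a : ℝ) : Summable fun n => |sinDivCoeff a n| := by
  refine (Real.hasSum_cosh |a|).summable.of_nonneg_of_le (fun n => abs_nonneg _) fun n => ?_
  rw [sinDivCoeff, abs_div, abs_mul, abs_pow, abs_pow, abs_neg, abs_one, one_pow, one_mul,
    Nat.abs_cast]
  gcongr
  exact Nat.le_succ _

lemma sin_mul_div_eq_mul_tsum_sinDivCoeff (a : ℝ) {x : ℝ} (hx : x ≠ 0) :
    sin (a * x) / x = a * ∑' n, sinDivCoeff a n * x ^ (2 * n) := by
  rw [Real.sin_eq_tsum, ← tsum_div_const, ← tsum_mul_left]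
  congr 1 with n
  rw [sinDivCoeff]
  field_simp
  ring

lemma integrableOn_sin_mul_mul_log_div (a : ℝ) :
    IntegrableOn (fun x : ℝ => sin (a * x) * log x / x) (Ioc 0 1) := by
  refine ((integrableOn_pow_mul_log 0).norm.const_mul |a|).mono'
    (by fun_prop : Measurable fun x : ℝ => sin (a * x) * log x / x).aestronglyMeasurable ?_
  rw [ae_restrict_iff' measurableSet_Ioc]
  refine Filter.Eventually.of_forall fun x hx => ?_
  rw [norm_div, norm_mul, norm_of_nonneg hx.1.le, pow_zero, one_mul, div_le_iff₀ hx.1]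
  calc ‖sin (a * x)‖ * ‖log x‖ ≤ |a * x| * ‖log x‖ := by gcongr; exact abs_sin_le_abs
    _ = |a| * ‖log x‖ * x := by rw [abs_mul, abs_of_pos hx.1]; ring

/-- For every real `a`,
`∫₀¹ sin(ax) (ln x)/x dx = -a Σ_{n≥0} (-1)^n a^{2n} / ((2n+1)! (2n+1)²)`,
the integral being absolutely convergent and the series absolutely convergent. -/
theorem sin_log_integral_zero_one (a : ℝ) :
    IntegrableOn (fun x : ℝ => Real.sin (a * x) * Real.log x / x) (Set.Ioc (0 : ℝ) 1) ∧
    Summable (fun n : ℕ =>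
      |(-1 : ℝ) ^ n * a ^ (2 * n) / ((2 * n + 1).factorial * (2 * n + 1 : ℝ) ^ 2)|) ∧
    (∫ x in Set.Ioc (0 : ℝ) 1, Real.sin (a * x) * Real.log x / x) =
      -a * ∑' n : ℕ,
        (-1 : ℝ) ^ n * a ^ (2 * n) / ((2 * n + 1).factorial * (2 * n + 1 : ℝ) ^ 2) := by
  have hc := summable_abs_sinDivCoeff a
  have h_term (n : ℕ) :
      (-1 : ℝ) ^ n * a ^ (2 * n) / ((2 * n + 1).factorial * (2 * n + 1 : ℝ) ^ 2) =
        sinDivCoeff a n / (((2 * n : ℕ) : ℝ) + 1) ^ 2 := by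
    rw [sinDivCoeff, div_div]; push_cast; rfl
  simp only [h_term]
  refine ⟨integrableOn_sin_mul_mul_log_div a, ?_, ?_⟩
  · refine hc.of_nonneg_of_le (fun n => abs_nonneg _) fun n => ?_
    rw [abs_div, abs_of_pos (by positivity : (0 : ℝ) < (((2 * n : ℕ) : ℝ) + 1) ^ 2)]
    exact div_natCast_add_one_sq_le (abs_nonneg _) (2 * n)
  · have h_series : ∀ x ∈ Ioc (0 : ℝ) 1, sin (a * x) * log x / x =
        a * ((∑' n, sinDivCoeff a n * x ^ (2 * n)) * log x) := fun x hx => by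
      rw [mul_div_right_comm, sin_mul_div_eq_mul_tsum_sinDivCoeff a hx.1.ne', mul_assoc]
    rw [setIntegral_congr_fun measurableSet_Ioc h_series, integral_const_mul,
      (hasSum_integral_tsum_mul_pow_mul_log hc (2 * ·)).tsum_eq.symm, tsum_neg, mul_neg, neg_mul]
end

section
/- Let k be a natural number, let s be a real number with s > 1, and let a be a real number. Then ∫₀^a ( ∫₁^∞ e^{ia'x} · (ln x)^k / x^s dx ) da' = −i · ∫₁^∞ e^{iax} · (ln x)^k / x^{s+1} dx + i · k! / s^{k+1}, where all inner integrals converge absolutely. -/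
/-!
Since `∫₀^a e^{ibx} x db = -i (e^{iax} - 1)`, swapping the two integrals by Fubini (the integrand
is dominated by `(log x)^k / x^s`, integrable for `s > 1`) turns the left side into
`-i ∫₁^∞ (e^{iax} - 1) (log x)^k / x^{s+1} dx`. The remaining term is a Gamma integral: the
substitution `x = e^u` gives `∫₁^∞ (log x)^k / x^{s+1} dx = ∫₀^∞ u^k e^{-su} du = k! / s^{k+1}`.
-/

open MeasureTheory Set

section
open Real

lemma exp_mul_log_pow_div_rpow_add_one_exp (k : ℕ) (t u : ℝ) :
    exp u * (log (exp u) ^ k / exp u ^ (t + 1)) = u ^ k * exp (-(t * u)) := by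
  rw [log_exp, ← exp_mul, mul_div_left_comm, ← exp_sub]
  ring_nf

lemma integrableOn_log_pow_div_rpow_add_one (k : ℕ) {t : ℝ} (ht : 0 < t) :
    IntegrableOn (fun x ↦ log x ^ k / x ^ (t + 1)) (Ioi 1) := by
  have hsubst := integrableOn_comp_exp_Ioi (fun x ↦ log x ^ k / x ^ (t + 1)) 0
  rw [exp_zero] at hsubst
  rw [← hsubst]
  simp only [smul_eq_mul, exp_mul_log_pow_div_rpow_add_one_exp]
  simpa [rpow_natCast] using
    integrableOn_rpow_mul_exp_neg_mul_rpow (s := k) (by linarith [k.cast_nonneg (α := ℝ)])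
      one_pos ht

lemma integral_log_pow_div_rpow_add_one (k : ℕ) {t : ℝ} (ht : 0 < t) :
    ∫ x in Ioi 1, log x ^ k / x ^ (t + 1) = k.factorial / t ^ (k + 1) := by
  have hsubst := integral_comp_exp_Ioi (fun x ↦ log x ^ k / x ^ (t + 1)) 0
  rw [exp_zero] at hsubst
  rw [← hsubst]
  simp only [smul_eq_mul, exp_mul_log_pow_div_rpow_add_one_exp]
  have hGamma := integral_rpow_mul_exp_neg_mul_Ioi (a := k + 1) (by positivity) ht
  simp only [add_sub_cancel_right, rpow_natCast, Gamma_nat_eq_factorial] at hGamma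
  rw [hGamma, ← Nat.cast_succ, rpow_natCast, one_div, inv_pow, inv_mul_eq_div]

end

section
open Complex

lemma norm_cexp_I_mul_mul (b x : ℝ) : ‖cexp (I * b * x)‖ = 1 := by
  simpa [mul_assoc] using norm_exp_I_mul_ofReal (b * x)

variable {μ : Measure ℝ} {f g : ℝ → ℂ}

lemma MeasureTheory.Integrable.cexp_I_mul_mul (hf : Integrable f μ) (b : ℝ) :
    Integrable (fun x : ℝ ↦ cexp (I * b * x) * f x) μ :=
  hf.bdd_mul (by fun_prop) (ae_of_all _ fun x ↦ (norm_cexp_I_mul_mul b x).le)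

lemma MeasureTheory.Integrable.prod_cexp_I_mul_mul [SFinite μ] (hf : Integrable f μ)
    (ν : Measure ℝ) [IsFiniteMeasure ν] :
    Integrable (fun p : ℝ × ℝ ↦ cexp (I * p.1 * p.2) * f p.2) (ν.prod μ) :=
  (hf.comp_snd ν).bdd_mul (by fun_prop) (ae_of_all _ fun p ↦ (norm_cexp_I_mul_mul p.1 p.2).le)

lemma intervalIntegral_cexp_I_mul_mul_ofReal_mul (a x : ℝ) (z : ℂ) :
    ∫ b in (0 : ℝ)..a, cexp (I * b * x) * (x * z) = -I * (cexp (I * a * x) * z) + I * z := by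
  have hderiv (b : ℝ) :
      HasDerivAt (fun b : ℝ ↦ -I * (cexp (I * b * x) * z)) (cexp (I * b * x) * (x * z)) b := by
    convert (((((hasDerivAt_id (b : ℂ)).const_mul I).mul_const (x : ℂ)).cexp.mul_const z).const_mul
      (-I)).comp_ofReal using 1 <;> simp only [id_eq]
    linear_combination (cexp (I * b * x) * x * z) * I_sq
  rw [intervalIntegral.integral_eq_sub_of_hasDerivAt (fun b _ ↦ hderiv b)
    ((by fun_prop : Continuous _).intervalIntegrable _ _)]
  simp

theorem intervalIntegral_integral_cexp_I_mul_mul [SFinite μ] (hf : Integrable f μ)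
    (hg : Integrable g μ) (hfg : ∀ᵐ x ∂μ, f x = x * g x) (a : ℝ) :
    ∫ b in (0 : ℝ)..a, ∫ x, cexp (I * b * x) * f x ∂μ =
      -I * ∫ x, cexp (I * a * x) * g x ∂μ + I * ∫ x, g x ∂μ := by
  have : IsFiniteMeasure (volume.restrict (uIoc 0 a)) :=
    isFiniteMeasure_restrict.2 measure_Ioc_lt_top.ne
  rw [intervalIntegral_integral_swap (hf.prod_cexp_I_mul_mul _), ← integral_const_mul,
    ← integral_const_mul, ← integral_add ((hg.cexp_I_mul_mul a).const_mul _) (hg.const_mul I)]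
  refine integral_congr_ae (hfg.mono fun x hx ↦ ?_)
  simp only [hx, intervalIntegral_cexp_I_mul_mul_ofReal_mul]

end

/-- For `k ∈ ℕ`, real `s > 1` and real `a`:
`∫₀^a (∫₁^∞ e^{ia'x} (ln x)^k / x^s dx) da'
  = -i ∫₁^∞ e^{iax} (ln x)^k / x^{s+1} dx + i k!/s^{k+1}`,
all inner integrals converging absolutely. -/
theorem integro_exponential_raise_s (k : ℕ) (s : ℝ) (hs : 1 < s) (a : ℝ) :
    (∀ b : ℝ, IntegrableOn
      (fun x : ℝ => Complex.exp (Complex.I * (b : ℂ) * (x : ℂ)) *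
        ((Real.log x ^ k / x ^ s : ℝ) : ℂ))
      (Set.Ioi (1 : ℝ))) ∧
    IntegrableOn
      (fun x : ℝ => Complex.exp (Complex.I * (a : ℂ) * (x : ℂ)) *
        ((Real.log x ^ k / x ^ (s + 1) : ℝ) : ℂ))
      (Set.Ioi (1 : ℝ)) ∧
    (∫ a' in (0 : ℝ)..a,
        ∫ x in Set.Ioi (1 : ℝ),
          Complex.exp (Complex.I * (a' : ℂ) * (x : ℂ)) *
            ((Real.log x ^ k / x ^ s : ℝ) : ℂ)) =
      -Complex.I *
          (∫ x in Set.Ioi (1 : ℝ),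
            Complex.exp (Complex.I * (a : ℂ) * (x : ℂ)) *
              ((Real.log x ^ k / x ^ (s + 1) : ℝ) : ℂ)) +
        Complex.I * (k.factorial : ℂ) / (s : ℂ) ^ (k + 1) := by
  have hs_pos : 0 < s := zero_lt_one.trans hs
  have hf : IntegrableOn (fun x ↦ ((Real.log x ^ k / x ^ s : ℝ) : ℂ)) (Ioi 1) := by
    have hf := integrableOn_log_pow_div_rpow_add_one k (sub_pos.2 hs)
    rw [sub_add_cancel] at hf
    exact hf.ofReal
  have hg : IntegrableOn (fun x ↦ ((Real.log x ^ k / x ^ (s + 1) : ℝ) : ℂ)) (Ioi 1) :=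
    (integrableOn_log_pow_div_rpow_add_one k hs_pos).ofReal
  refine ⟨fun b ↦ hf.cexp_I_mul_mul b, hg.cexp_I_mul_mul a, ?_⟩
  have hfg : ∀ᵐ x ∂volume.restrict (Ioi (1 : ℝ)),
      ((Real.log x ^ k / x ^ s : ℝ) : ℂ) = x * ((Real.log x ^ k / x ^ (s + 1) : ℝ) : ℂ) := by
    filter_upwards [ae_restrict_mem measurableSet_Ioi] with x hx
    have hx0 : (0 : ℝ) < x := zero_lt_one.trans hx
    rw [Real.rpow_add_one hx0.ne', ← Complex.ofReal_mul]
    field_simp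
  rw [intervalIntegral_integral_cexp_I_mul_mul hf hg hfg a, integral_complex_ofReal,
    integral_log_pow_div_rpow_add_one k hs_pos]
  push_cast
  ring
end

section
/- Let k be a natural number, let s be a real number with s > 2, and let a be a nonzero real number. Then ∫₁^∞ e^{iax} · (ln x)^k / x^s dx = −(ia/(k+1)) · ∫₁^∞ e^{iax} · (ln x)^{k+1} / x^{s−1} dx + ((s−1)/(k+1)) · ∫₁^∞ e^{iax} · (ln x)^{k+1} / x^s dx, all three integrals being absolutely convergent. -/
/-!
Integrate by parts on `(1, ∞)` with `u = e^{iax}` and `v = (ln x)^{k+1} / x^{s-1}`: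
`u' = ia·u` and `v' = ((k+1)(ln x)^k - (s-1)(ln x)^{k+1}) / x^s`, while `u v` vanishes at `1`
(as `ln 1 = 0`) and at `∞`. Hence, numbering the three integrals `I₀, I₁, I₂` in order,
`(k+1) I₀ - (s-1) I₂ = -ia I₁`. Absolute convergence follows from `(ln x)^m = o(x^ε)`, so the integrands are
`O(x^{-t'})` for some `t' > 1` as soon as the power of `x` exceeds `1`; this needs `s - 1 > 1`.
-/

open MeasureTheory
open Real Filter Set Asymptotics Topology
open Complex (I continuous_ofReal)

lemma isLittleO_log_pow_div_rpow_atTop (m : ℕ) {r t : ℝ} (h : r < t) :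
    (fun x => log x ^ m / x ^ t) =o[atTop] fun x => x ^ (-r) := by
  have := (isLittleO_log_rpow_rpow_atTop (m : ℝ) (sub_pos.2 h)).mul_isBigO
    (isBigO_refl (fun x : ℝ => x ^ (-t)) atTop)
  refine this.congr' ?_ ?_ <;> filter_upwards [eventually_gt_atTop 0] with x hx
  · rw [rpow_natCast, rpow_neg hx.le, div_eq_mul_inv]
  · rw [← rpow_add hx]; ring_nf

lemma tendsto_log_pow_div_rpow_atTop (m : ℕ) {t : ℝ} (ht : 0 < t) :
    Tendsto (fun x => log x ^ m / x ^ t) atTop (𝓝 0) :=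
  (isLittleO_one_iff ℝ).1 (by simpa using isLittleO_log_pow_div_rpow_atTop m ht)

lemma continuousOn_log_pow_div_rpow (m : ℕ) (t : ℝ) :
    ContinuousOn (fun x => log x ^ m / x ^ t) (Ioi 0) := by
  intro x hx
  exact ((continuousAt_log hx.ne').pow m |>.div (continuousAt_rpow_const x t (Or.inl hx.ne'))
    (rpow_pos_of_pos hx t).ne').continuousWithinAt

lemma integrableOn_Ioi_log_pow_div_rpow (m : ℕ) {t : ℝ} (ht : 1 < t) :
    IntegrableOn (fun x => log x ^ m / x ^ t) (Ioi 1) := by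
  have hloc : LocallyIntegrableOn (fun x => log x ^ m / x ^ t) (Ici 1) :=
    ((continuousOn_log_pow_div_rpow m t).mono fun _ hx => zero_lt_one.trans_le (mem_Ici.1 hx))
      |>.locallyIntegrableOn measurableSet_Ici
  have hdom : IntegrableAtFilter (fun x : ℝ => x ^ (-((1 + t) / 2))) atTop :=
    ⟨Ioi 1, Ioi_mem_atTop 1, integrableOn_Ioi_rpow_of_lt (by linarith) one_pos⟩
  exact (hloc.integrableOn_of_isBigO_atTop
    (isLittleO_log_pow_div_rpow_atTop m (by linarith)).isBigO hdom).mono_set Ioi_subset_Ici_self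

lemma norm_cexp_I_mul_ofReal_mul_ofReal (a x : ℝ) : ‖Complex.exp (I * a * x)‖ = 1 := by
  simp [Complex.norm_exp]

lemma hasDerivAt_cexp_I_mul_ofReal (a x : ℝ) :
    HasDerivAt (fun y : ℝ => Complex.exp (I * a * y)) (I * a * Complex.exp (I * a * x)) x := by
  simpa [mul_comm] using (((hasDerivAt_id (x : ℂ)).const_mul (I * a)).comp_ofReal).cexp

lemma MeasureTheory.IntegrableOn.cexp_I_mul_mul_ofReal {g : ℝ → ℝ} {s : Set ℝ}
    {μ : Measure ℝ} (hg : IntegrableOn g s μ) (a : ℝ) :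
    IntegrableOn (fun x : ℝ => Complex.exp (I * a * x) * (g x : ℂ)) s μ :=
  hg.ofReal.bdd_mul (c := 1) (by fun_prop) <| .of_forall fun x =>
    (norm_cexp_I_mul_ofReal_mul_ofReal a x).le

lemma hasDerivAt_log_pow_succ_div_rpow_sub_one (m : ℕ) (t : ℝ) {x : ℝ} (hx : 0 < x) :
    HasDerivAt (fun y => log y ^ (m + 1) / y ^ (t - 1))
      ((m + 1) * (log x ^ m / x ^ t) - (t - 1) * (log x ^ (m + 1) / x ^ t)) x := by
  have hpow : HasDerivAt (fun y => log y ^ (m + 1) / y ^ (t - 1)) _ x :=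
    ((hasDerivAt_log hx.ne').pow (m + 1)).div
    (hasDerivAt_rpow_const (p := t - 1) (Or.inl hx.ne')) (rpow_pos_of_pos hx _).ne'
  convert hpow using 1
  simp only [Pi.pow_apply, Nat.add_sub_cancel]
  rw [rpow_sub_one hx.ne', show t - 1 - 1 = t - 2 by ring, rpow_sub hx, rpow_two]
  have := (rpow_pos_of_pos hx t).ne'
  field_simp
  push_cast
  ring

noncomputable def oscLogPowDivRpow (a : ℝ) (m : ℕ) (t x : ℝ) : ℂ :=
  Complex.exp (I * a * x) * ((log x ^ m / x ^ t : ℝ) : ℂ)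

lemma integrableOn_Ioi_oscLogPowDivRpow (a : ℝ) (m : ℕ) {t : ℝ} (ht : 1 < t) :
    IntegrableOn (oscLogPowDivRpow a m t) (Ioi 1) :=
  (integrableOn_Ioi_log_pow_div_rpow m ht).cexp_I_mul_mul_ofReal a

lemma tendsto_oscLogPowDivRpow_atTop (a : ℝ) (m : ℕ) {t : ℝ} (ht : 0 < t) :
    Tendsto (oscLogPowDivRpow a m t) atTop (𝓝 0) := by
  refine tendsto_zero_iff_norm_tendsto_zero.2 ?_
  simpa [oscLogPowDivRpow, norm_cexp_I_mul_ofReal_mul_ofReal] using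
    (tendsto_log_pow_div_rpow_atTop m ht).norm

lemma tendsto_oscLogPowDivRpow_succ_nhdsGT_one (a : ℝ) (m : ℕ) (t : ℝ) :
    Tendsto (oscLogPowDivRpow a (m + 1) t) (𝓝[>] 1) (𝓝 0) := by
  have hcont : ContinuousAt (oscLogPowDivRpow a (m + 1) t) 1 :=
    (by fun_prop : Continuous fun x : ℝ => Complex.exp (I * a * x)).continuousAt.mul
      (continuous_ofReal.continuousAt.comp
        ((continuousOn_log_pow_div_rpow (m + 1) t).continuousAt (Ioi_mem_nhds one_pos)))
  simpa [oscLogPowDivRpow] using hcont.tendsto.mono_left nhdsWithin_le_nhds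

theorem integral_Ioi_oscLogPowDivRpow_by_parts (a : ℝ) (k : ℕ) {s : ℝ} (hs : 2 < s) :
    ((k : ℂ) + 1) * (∫ x in Ioi 1, oscLogPowDivRpow a k s x)
        - ((s : ℂ) - 1) * (∫ x in Ioi 1, oscLogPowDivRpow a (k + 1) s x)
      = -(I * a) * ∫ x in Ioi 1, oscLogPowDivRpow a (k + 1) (s - 1) x := by
  set u : ℝ → ℂ := fun x => Complex.exp (I * a * x)
  set v : ℝ → ℂ := fun x => ((log x ^ (k + 1) / x ^ (s - 1) : ℝ) : ℂ)
  have hu (x : ℝ) : HasDerivAt u (I * a * u x) x := hasDerivAt_cexp_I_mul_ofReal a x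
  have hv (x : ℝ) (hx : x ∈ Ioi 1) : HasDerivAt v
      (((k + 1) * (log x ^ k / x ^ s) - (s - 1) * (log x ^ (k + 1) / x ^ s) : ℝ) : ℂ) x :=
    (hasDerivAt_log_pow_succ_div_rpow_sub_one k s (one_pos.trans hx)).ofReal_comp
  have huv' : (fun x => u x * (((k + 1) * (log x ^ k / x ^ s)
      - (s - 1) * (log x ^ (k + 1) / x ^ s) : ℝ) : ℂ)) = fun x =>
      ((k : ℂ) + 1) * oscLogPowDivRpow a k s x
        - ((s : ℂ) - 1) * oscLogPowDivRpow a (k + 1) s x := by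
    ext x; simp only [u, oscLogPowDivRpow]; push_cast; ring
  have hu'v : (fun x => I * a * u x * v x) =
      fun x => I * a * oscLogPowDivRpow a (k + 1) (s - 1) x := by
    ext x; simp only [u, v, oscLogPowDivRpow]; ring
  have huv : u * v = oscLogPowDivRpow a (k + 1) (s - 1) := rfl
  have hint₀ := integrableOn_Ioi_oscLogPowDivRpow a k (t := s) (by linarith)
  have hint₁ := integrableOn_Ioi_oscLogPowDivRpow a (k + 1) (t := s) (by linarith)
  have hint₂ := integrableOn_Ioi_oscLogPowDivRpow a (k + 1) (t := s - 1) (by linarith)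
  have hparts := integral_Ioi_mul_deriv_eq_deriv_mul (fun x _ => hu x) hv
    (by rw [Pi.mul_def, huv']; exact (hint₀.const_mul _).sub (hint₁.const_mul _))
    (by rw [Pi.mul_def, hu'v]; exact hint₂.const_mul _)
    (huv ▸ tendsto_oscLogPowDivRpow_succ_nhdsGT_one a k (s - 1))
    (huv ▸ tendsto_oscLogPowDivRpow_atTop a (k + 1) (by linarith))
  rw [huv', hu'v, integral_sub (hint₀.const_mul _) (hint₁.const_mul _), integral_const_mul,
    integral_const_mul, integral_const_mul] at hparts
  rw [hparts]; ring

theorem integro_exponential_contiguous_general (k : ℕ) (s : ℝ) (hs : 2 < s) (a : ℝ) :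
    IntegrableOn
      (fun x : ℝ => Complex.exp (Complex.I * (a : ℂ) * (x : ℂ)) *
        ((Real.log x ^ k / x ^ s : ℝ) : ℂ)) (Set.Ioi (1 : ℝ)) ∧
    IntegrableOn
      (fun x : ℝ => Complex.exp (Complex.I * (a : ℂ) * (x : ℂ)) *
        ((Real.log x ^ (k + 1) / x ^ (s - 1) : ℝ) : ℂ)) (Set.Ioi (1 : ℝ)) ∧
    IntegrableOn
      (fun x : ℝ => Complex.exp (Complex.I * (a : ℂ) * (x : ℂ)) *
        ((Real.log x ^ (k + 1) / x ^ s : ℝ) : ℂ)) (Set.Ioi (1 : ℝ)) ∧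
    (∫ x in Set.Ioi (1 : ℝ),
        Complex.exp (Complex.I * (a : ℂ) * (x : ℂ)) *
          ((Real.log x ^ k / x ^ s : ℝ) : ℂ)) =
      -(Complex.I * (a : ℂ) / ((k : ℂ) + 1)) *
          (∫ x in Set.Ioi (1 : ℝ),
            Complex.exp (Complex.I * (a : ℂ) * (x : ℂ)) *
              ((Real.log x ^ (k + 1) / x ^ (s - 1) : ℝ) : ℂ)) +
        (((s : ℂ) - 1) / ((k : ℂ) + 1)) *
          ∫ x in Set.Ioi (1 : ℝ),
            Complex.exp (Complex.I * (a : ℂ) * (x : ℂ)) *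
              ((Real.log x ^ (k + 1) / x ^ s : ℝ) : ℂ) := by
  have hk : (k : ℂ) + 1 ≠ 0 := Nat.cast_add_one_ne_zero k
  have hparts := integral_Ioi_oscLogPowDivRpow_by_parts a k hs
  refine ⟨integrableOn_Ioi_oscLogPowDivRpow a k (by linarith),
    integrableOn_Ioi_oscLogPowDivRpow a (k + 1) (by linarith),
    integrableOn_Ioi_oscLogPowDivRpow a (k + 1) (by linarith), ?_⟩
  change ∫ x in Ioi 1, oscLogPowDivRpow a k s x =
    -(I * a / ((k : ℂ) + 1)) * (∫ x in Ioi 1, oscLogPowDivRpow a (k + 1) (s - 1) x) +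
      (((s : ℂ) - 1) / ((k : ℂ) + 1)) * ∫ x in Ioi 1, oscLogPowDivRpow a (k + 1) s x
  field_simp
  linear_combination hparts

/-- Contiguous relation: for `k ∈ ℕ`, real `s > 2` and real `a ≠ 0`,
`∫₁^∞ e^{iax} (ln x)^k / x^s dx
  = -(ia/(k+1)) ∫₁^∞ e^{iax} (ln x)^{k+1} / x^{s-1} dx
    + ((s-1)/(k+1)) ∫₁^∞ e^{iax} (ln x)^{k+1} / x^s dx`,
all three integrals being absolutely convergent. -/
theorem integro_exponential_contiguous (k : ℕ) (s : ℝ) (hs : 2 < s) (a : ℝ) (ha : a ≠ 0) :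
    IntegrableOn
      (fun x : ℝ => Complex.exp (Complex.I * (a : ℂ) * (x : ℂ)) *
        ((Real.log x ^ k / x ^ s : ℝ) : ℂ)) (Set.Ioi (1 : ℝ)) ∧
    IntegrableOn
      (fun x : ℝ => Complex.exp (Complex.I * (a : ℂ) * (x : ℂ)) *
        ((Real.log x ^ (k + 1) / x ^ (s - 1) : ℝ) : ℂ)) (Set.Ioi (1 : ℝ)) ∧
    IntegrableOn
      (fun x : ℝ => Complex.exp (Complex.I * (a : ℂ) * (x : ℂ)) *
        ((Real.log x ^ (k + 1) / x ^ s : ℝ) : ℂ)) (Set.Ioi (1 : ℝ)) ∧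
    (∫ x in Set.Ioi (1 : ℝ),
        Complex.exp (Complex.I * (a : ℂ) * (x : ℂ)) *
          ((Real.log x ^ k / x ^ s : ℝ) : ℂ)) =
      -(Complex.I * (a : ℂ) / ((k : ℂ) + 1)) *
          (∫ x in Set.Ioi (1 : ℝ),
            Complex.exp (Complex.I * (a : ℂ) * (x : ℂ)) *
              ((Real.log x ^ (k + 1) / x ^ (s - 1) : ℝ) : ℂ)) +
        (((s : ℂ) - 1) / ((k : ℂ) + 1)) *
          ∫ x in Set.Ioi (1 : ℝ),
            Complex.exp (Complex.I * (a : ℂ) * (x : ℂ)) *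
              ((Real.log x ^ (k + 1) / x ^ s : ℝ) : ℂ) :=
  integro_exponential_contiguous_general k s hs a
end
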